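/- arXiv:1410.5545 — 9 statements merged into one kernel-verified Lean document; each statement's English description precedes it below -/
import Mathlib

section
/- Let a, b, c, d > 0 with ab > 1, and set e = a(c+d)c/(ab-1), f = a(c+d)d/(ab-1), g = √(acd), h = be - c², k = bf - d². For α ∈ ℂ, let M(α) be the 4×4 Hermitian matrix Φ(P_α) = [[h - cd(α + ᾱ) + k|α|², -g + gα, 0, 0], [-g + gᾱ, a, ᾱ, 0], [0, α, b|α|², -cᾱ - d|α|²], [0, 0, -cα - d|α|², e + f|α|²]]. Then Δ₃(α), the determinant of the bottom-right 3×3 submatrix of M(α), equals acd|α|²|1-α|². -/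
/-- The determinant of the bottom-right 3×3 submatrix of `Φ(P_α)` equals
`acd·|α|²·|1-α|²`. -/
theorem delta3_formula (a b c d e f g h k : ℝ)
    (ha : 0 < a) (hb : 0 < b) (hc : 0 < c) (hd : 0 < d) (hab : 1 < a * b)
    (hg : g ^ 2 = a * c * d)
    (he : (a * b - 1) * e = a * (c + d) * c)
    (hf : (a * b - 1) * f = a * (c + d) * d)
    (hh : h = b * e - c ^ 2) (hk : k = b * f - d ^ 2) (α : ℂ) :
    Matrix.det
      !![(a : ℂ), starRingEnd ℂ α, 0;
         α, (b : ℂ) * (‖α‖ : ℂ) ^ 2,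
           -(c : ℂ) * starRingEnd ℂ α - (d : ℂ) * (‖α‖ : ℂ) ^ 2;
         0, -(c : ℂ) * α - (d : ℂ) * (‖α‖ : ℂ) ^ 2,
           (e : ℂ) + (f : ℂ) * (‖α‖ : ℂ) ^ 2] =
      ((a * c * d : ℝ) : ℂ) * (‖α‖ : ℂ) ^ 2 * (‖1 - α‖ : ℂ) ^ 2 := by
  have hne : ((a * b - 1 : ℝ) : ℂ) ≠ 0 := by
    rw [Complex.ofReal_ne_zero]
    linarith
  have habs : ((‖α‖ : ℝ) : ℂ) ^ 2 = α * starRingEnd ℂ α := by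
    rw [← Complex.ofReal_pow, Complex.sq_norm, Complex.mul_conj]
  have habs1 : ((‖1 - α‖ : ℝ) : ℂ) ^ 2
      = (1 - α) * (1 - starRingEnd ℂ α) := by
    rw [← Complex.ofReal_pow, Complex.sq_norm, ← Complex.mul_conj, map_sub, map_one]
  have heC : ((a * b - 1 : ℝ) : ℂ) * (e : ℂ) = (a : ℂ) * ((c : ℂ) + d) * c := by
    push_cast
    exact_mod_cast congrArg (Complex.ofReal) he
  have hfC : ((a * b - 1 : ℝ) : ℂ) * (f : ℂ) = (a : ℂ) * ((c : ℂ) + d) * d := by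
    push_cast
    exact_mod_cast congrArg (Complex.ofReal) hf
  rw [habs, habs1]
  simp only [Matrix.det_fin_three, Matrix.of_apply, Matrix.cons_val', Matrix.cons_val_zero,
    Matrix.cons_val_one, Matrix.head_cons, Matrix.empty_val', Matrix.cons_val_fin_one,
    Matrix.head_fin_const, Matrix.cons_val_two, Matrix.tail_cons]
  apply mul_left_cancel₀ hne
  push_cast at heC hfC ⊢
  linear_combination ((a:ℂ) * b - 1) * (α * starRingEnd ℂ α) * heC + ((a:ℂ) * b - 1) * (α * starRingEnd ℂ α) ^ 2 * hfC
end

section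
/- With the setup of the map Φ[a,b,c,d] (a,b,c,d > 0, ab > 1, g² = acd, (ab-1)e = a(c+d)c, (ab-1)f = a(c+d)d, h = be - c², k = bf - d²), the determinant of the full 4×4 matrix Φ(P_α) is zero for every α ∈ ℂ. -/
/-!
`Φ(P_α)` is tridiagonal, so its determinant is the continuant
`(x₁x₂ - p₁)(x₃x₄ - p₃) - x₁x₄p₂`, where `xᵢ` are the diagonal entries and `pᵢ` the products of
the off-diagonal pairs. With `s = |α|²`, the relations for `h` and `k` make the lower minor
`x₃x₄ - p₃` equal to `s x₁`, and the relations for `e`, `f`, `g` make the upper minor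
`a x₁ - |g(α - 1)|²` equal to `x₄`. Since `p₂ = s`, the two terms cancel.
-/

theorem Matrix.det_tridiagonal_fin_four {R : Type*} [CommRing R]
    (x₁ x₂ x₃ x₄ u₁ u₂ u₃ l₁ l₂ l₃ : R) :
    Matrix.det !![x₁, u₁, 0, 0; l₁, x₂, u₂, 0; 0, l₂, x₃, u₃; 0, 0, l₃, x₄] =
      (x₁ * x₂ - u₁ * l₁) * (x₃ * x₄ - u₃ * l₃) - x₁ * x₄ * (u₂ * l₂) := by
  simp only [det_succ_row_zero, Nat.succ_eq_add_one, Nat.reduceAdd, Fin.isValue, of_apply, cons_val',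
    cons_val_fin_one, cons_val_zero, submatrix_apply, Fin.succ_zero_eq_one, Fin.succAbove, cons_val_one,
    submatrix_submatrix, Function.comp_apply, Fin.succ_one_eq_two, cons_val, det_unique, Fin.default_eq_zero,
    Fin.reduceSucc, Fin.castSucc_zero, Fin.sum_univ_succ, Fin.coe_ofNat_eq_mod, Nat.zero_mod, pow_zero, one_mul,
    lt_self_iff_false, ↓reduceIte, Fin.castSucc_one, Finset.univ_unique, Fin.val_succ, Fin.val_eq_zero, zero_add,
    pow_one, Fin.castSucc_succ, neg_mul, Fin.succ_pos, Finset.sum_neg_distrib, Finset.sum_singleton, not_lt_zero,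
    Fin.reduceCastSucc, even_two, Even.neg_pow, one_pow, Fin.reduceLT, mul_zero, neg_zero, add_zero, zero_mul,
    cons_val_succ, Fin.lt_one_iff, Fin.reduceEq, Finset.sum_const_zero]
  ring

section Minors

variable {R : Type*} [CommRing R] {a b c d e f g h k α β s : R}

theorem PhiPalpha_lower_minor (hh : h = b * e - c ^ 2) (hk : k = b * f - d ^ 2)
    (hs : s = α * β) :
    b * s * (e + f * s) - (-c * β - d * s) * (-c * α - d * s) =
      s * (h - c * d * (α + β) + k * s) := by
  subst hh hk
  linear_combination c ^ 2 * hs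

theorem PhiPalpha_upper_minor (hg : g ^ 2 = a * c * d)
    (he : (a * b - 1) * e = a * (c + d) * c) (hf : (a * b - 1) * f = a * (c + d) * d)
    (hh : h = b * e - c ^ 2) (hk : k = b * f - d ^ 2) (hs : s = α * β) :
    (h - c * d * (α + β) + k * s) * a - (-g + g * α) * (-g + g * β) = e + f * s := by
  subst hh hk
  linear_combination he + s * hf - (s - α - β + 1) * hg + g ^ 2 * hs

end Minors

theorem det_PhiPalpha_eq_zero_general (a b c d e f g h k : ℝ)
    (hg : g ^ 2 = a * c * d)
    (he : (a * b - 1) * e = a * (c + d) * c)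
    (hf : (a * b - 1) * f = a * (c + d) * d)
    (hh : h = b * e - c ^ 2) (hk : k = b * f - d ^ 2) (α : ℂ) :
    Matrix.det
      !![(h : ℂ) - (c : ℂ) * (d : ℂ) * (α + starRingEnd ℂ α) +
           (k : ℂ) * (‖α‖ : ℂ) ^ 2, -(g : ℂ) + (g : ℂ) * α, 0, 0;
         -(g : ℂ) + (g : ℂ) * starRingEnd ℂ α, (a : ℂ), starRingEnd ℂ α, 0;
         0, α, (b : ℂ) * (‖α‖ : ℂ) ^ 2,
           -(c : ℂ) * starRingEnd ℂ α - (d : ℂ) * (‖α‖ : ℂ) ^ 2;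
         0, 0, -(c : ℂ) * α - (d : ℂ) * (‖α‖ : ℂ) ^ 2,
           (e : ℂ) + (f : ℂ) * (‖α‖ : ℂ) ^ 2] = 0 := by
  have hs : (‖α‖ : ℂ) ^ 2 = α * starRingEnd ℂ α := by
    rw [Complex.mul_conj, ← Complex.sq_norm, Complex.ofReal_pow]
  have hg' : (g : ℂ) ^ 2 = a * c * d := by exact_mod_cast hg
  have he' : ((a : ℂ) * b - 1) * e = a * (c + d) * c := by exact_mod_cast he
  have hf' : ((a : ℂ) * b - 1) * f = a * (c + d) * d := by exact_mod_cast hf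
  have hh' : (h : ℂ) = b * e - c ^ 2 := by exact_mod_cast hh
  have hk' : (k : ℂ) = b * f - d ^ 2 := by exact_mod_cast hk
  rw [Matrix.det_tridiagonal_fin_four, PhiPalpha_lower_minor hh' hk' hs,
    PhiPalpha_upper_minor hg' he' hf' hh' hk' hs, hs]
  ring

/-- The determinant of the full 4×4 matrix `Φ(P_α)` vanishes for every `α ∈ ℂ`. -/
theorem det_PhiPalpha_eq_zero (a b c d e f g h k : ℝ)
    (ha : 0 < a) (hb : 0 < b) (hc : 0 < c) (hd : 0 < d) (hab : 1 < a * b)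
    (hg : g ^ 2 = a * c * d)
    (he : (a * b - 1) * e = a * (c + d) * c)
    (hf : (a * b - 1) * f = a * (c + d) * d)
    (hh : h = b * e - c ^ 2) (hk : k = b * f - d ^ 2) (α : ℂ) :
    Matrix.det
      !![(h : ℂ) - (c : ℂ) * (d : ℂ) * (α + starRingEnd ℂ α) +
           (k : ℂ) * (‖α‖ : ℂ) ^ 2, -(g : ℂ) + (g : ℂ) * α, 0, 0;
         -(g : ℂ) + (g : ℂ) * starRingEnd ℂ α, (a : ℂ), starRingEnd ℂ α, 0;
         0, α, (b : ℂ) * (‖α‖ : ℂ) ^ 2,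
           -(c : ℂ) * starRingEnd ℂ α - (d : ℂ) * (‖α‖ : ℂ) ^ 2;
         0, 0, -(c : ℂ) * α - (d : ℂ) * (‖α‖ : ℂ) ^ 2,
           (e : ℂ) + (f : ℂ) * (‖α‖ : ℂ) ^ 2] = 0 :=
  det_PhiPalpha_eq_zero_general a b c d e f g h k hg he hf hh hk α
end

section
/- With the setup of Φ[a,b,c,d], for every α ∈ ℂ with α ≠ 0 and α ≠ 1, the matrix Φ(P_α) is positive semidefinite of rank exactly 3. -/
/-!
Write `A = Φ₁₁ = h - 2cd Re α + k|α|²` and `E = Φ₄₄ = e + f|α|²`. Unwinding the definitions of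
`e, f, h, k` gives `a A = acd |α - 1|² + E` and `b E = A + |c + dα|²`, hence
`(ab - 1) A = |c + dα|² + abcd |1 - α|² > 0`. These two identities are exactly what makes the
symmetric Gaussian elimination of `Φ` close up after three pivots:
`Φ = Cᴴ diag(A⁻¹, (AE)⁻¹, E⁻¹) C` with
`C = [[A, g(α - 1), 0, 0], [0, E, Aᾱ, 0], [0, 0, -α(c + dᾱ), E]]`.
So `Φ` is positive semidefinite and has the rank of `C`, which is 3 because columns 1, 2, 4 of `C`
form a triangular block with diagonal `A, E, E`.
-/

open ComplexOrder Matrix ComplexConjugate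

namespace Matrix

variable {𝕜 m n : Type*} [RCLike 𝕜] [Fintype m] [DecidableEq m]

theorem conjTranspose_mul_diagonal_mul_eq_conjTranspose_mul_self (B : Matrix m n 𝕜)
    {w : m → ℝ} (hw : ∀ i, 0 ≤ w i) :
    Bᴴ * diagonal (fun i ↦ (w i : 𝕜)) * B =
      (diagonal (fun i ↦ (√(w i) : 𝕜)) * B)ᴴ * (diagonal (fun i ↦ (√(w i) : 𝕜)) * B) := by
  have hsq : diagonal (fun i ↦ (w i : 𝕜)) =
      (diagonal (fun i ↦ (√(w i) : 𝕜)))ᴴ * diagonal (fun i ↦ (√(w i) : 𝕜)) := by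
    rw [diagonal_conjTranspose, diagonal_mul_diagonal]
    congr 1
    funext i
    simp [← RCLike.ofReal_mul, Real.mul_self_sqrt (hw i)]
  rw [hsq, conjTranspose_mul]
  simp only [Matrix.mul_assoc]

theorem posSemidef_conjTranspose_mul_diagonal_mul [Fintype n] (B : Matrix m n 𝕜) {w : m → ℝ}
    (hw : ∀ i, 0 ≤ w i) : (Bᴴ * diagonal (fun i ↦ (w i : 𝕜)) * B).PosSemidef := by
  rw [conjTranspose_mul_diagonal_mul_eq_conjTranspose_mul_self B hw]
  exact posSemidef_conjTranspose_mul_self _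

theorem rank_conjTranspose_mul_diagonal_mul [Fintype n] (B : Matrix m n 𝕜) {w : m → ℝ}
    (hw : ∀ i, 0 < w i) : (Bᴴ * diagonal (fun i ↦ (w i : 𝕜)) * B).rank = B.rank := by
  rw [conjTranspose_mul_diagonal_mul_eq_conjTranspose_mul_self B fun i ↦ (hw i).le,
    rank_conjTranspose_mul_self]
  refine rank_mul_eq_right_of_det_ne_zero _ _ ?_
  simpa [det_diagonal, Finset.prod_ne_zero_iff] using fun i ↦ (Real.sqrt_pos.mpr (hw i)).ne'

theorem rank_eq_card_height_of_isUnit_det_submatrix {R : Type*} [CommRing R]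
    [StrongRankCondition R] [Fintype n] (A : Matrix m n R) (c : m → n)
    (h : IsUnit (A.submatrix id c).det) : A.rank = Fintype.card m := by
  refine le_antisymm A.rank_le_card_height ?_
  calc Fintype.card m = (A.submatrix id c).rank :=
        (rank_of_isUnit _ ((isUnit_iff_isUnit_det _).mpr h)).symm
    _ ≤ A.rank := rank_submatrix_le A id c

end Matrix

noncomputable section

def Phi (a b c d e f g h k : ℝ) (α : ℂ) : Matrix (Fin 4) (Fin 4) ℂ :=
  !![(h : ℂ) - (c : ℂ) * (d : ℂ) * (α + starRingEnd ℂ α) +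
       (k : ℂ) * (‖α‖ : ℂ) ^ 2, -(g : ℂ) + (g : ℂ) * α, 0, 0;
     -(g : ℂ) + (g : ℂ) * starRingEnd ℂ α, (a : ℂ), starRingEnd ℂ α, 0;
     0, α, (b : ℂ) * (‖α‖ : ℂ) ^ 2,
       -(c : ℂ) * starRingEnd ℂ α - (d : ℂ) * (‖α‖ : ℂ) ^ 2;
     0, 0, -(c : ℂ) * α - (d : ℂ) * (‖α‖ : ℂ) ^ 2,
       (e : ℂ) + (f : ℂ) * (‖α‖ : ℂ) ^ 2]

def phiA (c d h k : ℝ) (α : ℂ) : ℝ := h - 2 * c * d * α.re + k * ‖α‖ ^ 2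

def phiE (e f : ℝ) (α : ℂ) : ℝ := e + f * ‖α‖ ^ 2

lemma ofReal_phiA (c d h k : ℝ) (α : ℂ) :
    (phiA c d h k α : ℂ) = h - c * d * (α + conj α) + k * (‖α‖ : ℂ) ^ 2 := by
  rw [phiA]
  push_cast
  rw [Complex.re_eq_add_conj]
  ring

lemma ofReal_phiE (e f : ℝ) (α : ℂ) : (phiE e f α : ℂ) = e + f * (‖α‖ : ℂ) ^ 2 := by
  rw [phiE]
  push_cast
  ring

lemma phiE_pos {e f : ℝ} (he : 0 < e) (hf : 0 ≤ f) (α : ℂ) : 0 < phiE e f α := by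
  rw [phiE]
  positivity

section

variable {a b c d e f h k : ℝ}

lemma mul_phiA_eq (he : e * (a * b - 1) = a * (c + d) * c)
    (hf : f * (a * b - 1) = a * (c + d) * d) (hh : h = b * e - c ^ 2) (hk : k = b * f - d ^ 2)
    (α : ℂ) : (a : ℂ) * phiA c d h k α = a * c * d * ((α - 1) * (conj α - 1)) + phiE e f α := by
  rw [ofReal_phiA, ofReal_phiE, ← Complex.mul_conj']
  linear_combination (norm := (push_cast; ring)) congr(($he : ℂ)) + α * conj α * congr(($hf : ℂ))
    + a * congr(($hh : ℂ)) + a * α * conj α * congr(($hk : ℂ))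

lemma mul_phiE_eq (hh : h = b * e - c ^ 2) (hk : k = b * f - d ^ 2) (α : ℂ) :
    (b : ℂ) * phiE e f α = phiA c d h k α + (c + d * α) * (c + d * conj α) := by
  rw [ofReal_phiA, ofReal_phiE, ← Complex.mul_conj', hh, hk]
  push_cast
  ring

lemma mul_phiA_eq_norm_sq_add (he : e * (a * b - 1) = a * (c + d) * c)
    (hf : f * (a * b - 1) = a * (c + d) * d) (hh : h = b * e - c ^ 2) (hk : k = b * f - d ^ 2)
    (α : ℂ) : (a * b - 1) * phiA c d h k α = ‖c + d * α‖ ^ 2 + a * b * c * d * ‖1 - α‖ ^ 2 := by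
  apply Complex.ofReal_injective
  push_cast
  simp only [← Complex.mul_conj', map_add, map_sub, map_mul, map_one, Complex.conj_ofReal]
  linear_combination b * mul_phiA_eq he hf hh hk α + mul_phiE_eq hh hk α

lemma phiA_pos (hc : 0 < c) (hd : 0 < d) (hab : 1 < a * b)
    (he : e * (a * b - 1) = a * (c + d) * c) (hf : f * (a * b - 1) = a * (c + d) * d)
    (hh : h = b * e - c ^ 2) (hk : k = b * f - d ^ 2) (α : ℂ) : 0 < phiA c d h k α := by
  refine pos_of_mul_pos_right (a := a * b - 1) ?_ (by linarith)
  rw [mul_phiA_eq_norm_sq_add he hf hh hk]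
  rcases eq_or_ne α 1 with rfl | hα
  · rw [mul_one, ← Complex.ofReal_add, Complex.norm_real, Real.norm_of_nonneg (by positivity)]
    positivity
  · have : 0 < ‖1 - α‖ := norm_pos_iff.mpr (sub_ne_zero.mpr hα.symm)
    positivity

end

def phiFactor (A E g c d : ℝ) (α : ℂ) : Matrix (Fin 3) (Fin 4) ℂ :=
  !![(A : ℂ), g * (α - 1), 0, 0; 0, E, A * conj α, 0; 0, 0, -α * (c + d * conj α), E]

def phiWeights (A E : ℝ) : Fin 3 → ℝ := ![A⁻¹, (A * E)⁻¹, E⁻¹]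

lemma phiWeights_pos {A E : ℝ} (hA : 0 < A) (hE : 0 < E) (i : Fin 3) : 0 < phiWeights A E i := by
  fin_cases i <;> simp [phiWeights] <;> positivity

lemma rank_phiFactor {A E : ℝ} (hA : A ≠ 0) (hE : E ≠ 0) (g c d : ℝ) (α : ℂ) :
    (phiFactor A E g c d α).rank = 3 := by
  refine (rank_eq_card_height_of_isUnit_det_submatrix _ ![0, 1, 3] ?_).trans (Fintype.card_fin 3)
  simp [phiFactor, det_fin_three, hA, hE]

lemma Phi_eq_conjTranspose_mul_diagonal_mul {a b c d e f g h k : ℝ} {α : ℂ}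
    (hA : phiA c d h k α ≠ 0) (hE : phiE e f α ≠ 0) (hg : g ^ 2 = a * c * d)
    (haA : (a : ℂ) * phiA c d h k α = a * c * d * ((α - 1) * (conj α - 1)) + phiE e f α)
    (hbE : (b : ℂ) * phiE e f α = phiA c d h k α + (c + d * α) * (c + d * conj α)) :
    Phi a b c d e f g h k α = (phiFactor (phiA c d h k α) (phiE e f α) g c d α)ᴴ *
      diagonal (fun i ↦ (phiWeights (phiA c d h k α) (phiE e f α) i : ℂ)) *
      phiFactor (phiA c d h k α) (phiE e f α) g c d α := by
  rw [Phi, ← ofReal_phiA, ← ofReal_phiE, ← Complex.mul_conj']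
  generalize phiA c d h k α = A at *
  generalize phiE e f α = E at *
  have hgC : (g : ℂ) ^ 2 = a * c * d := by exact_mod_cast hg
  rw [← hgC, ← eq_div_iff_mul_eq (Complex.ofReal_ne_zero.mpr hA)] at haA
  rw [← eq_div_iff_mul_eq (Complex.ofReal_ne_zero.mpr hE)] at hbE
  ext i j
  fin_cases i <;> fin_cases j <;>
    simp [phiFactor, phiWeights, mul_apply, Fin.sum_univ_succ, haA, hbE] <;> field_simp <;> ring

end

theorem PhiPalpha_posSemidef_rank_three_general (a b c d e f g h k : ℝ)
    (ha : 0 < a) (hc : 0 < c) (hd : 0 < d) (hab : 1 < a * b)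
    (hg : g = Real.sqrt (a * c * d))
    (he : e = a * (c + d) * c / (a * b - 1))
    (hf : f = a * (c + d) * d / (a * b - 1))
    (hh : h = b * e - c ^ 2) (hk : k = b * f - d ^ 2)
    (α : ℂ) :
    Matrix.PosSemidef
      !![(h : ℂ) - (c : ℂ) * (d : ℂ) * (α + starRingEnd ℂ α) +
           (k : ℂ) * (‖α‖ : ℂ) ^ 2, -(g : ℂ) + (g : ℂ) * α, 0, 0;
         -(g : ℂ) + (g : ℂ) * starRingEnd ℂ α, (a : ℂ), starRingEnd ℂ α, 0;
         0, α, (b : ℂ) * (‖α‖ : ℂ) ^ 2,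
           -(c : ℂ) * starRingEnd ℂ α - (d : ℂ) * (‖α‖ : ℂ) ^ 2;
         0, 0, -(c : ℂ) * α - (d : ℂ) * (‖α‖ : ℂ) ^ 2,
           (e : ℂ) + (f : ℂ) * (‖α‖ : ℂ) ^ 2] ∧
    Matrix.rank
      !![(h : ℂ) - (c : ℂ) * (d : ℂ) * (α + starRingEnd ℂ α) +
           (k : ℂ) * (‖α‖ : ℂ) ^ 2, -(g : ℂ) + (g : ℂ) * α, 0, 0;
         -(g : ℂ) + (g : ℂ) * starRingEnd ℂ α, (a : ℂ), starRingEnd ℂ α, 0;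
         0, α, (b : ℂ) * (‖α‖ : ℂ) ^ 2,
           -(c : ℂ) * starRingEnd ℂ α - (d : ℂ) * (‖α‖ : ℂ) ^ 2;
         0, 0, -(c : ℂ) * α - (d : ℂ) * (‖α‖ : ℂ) ^ 2,
           (e : ℂ) + (f : ℂ) * (‖α‖ : ℂ) ^ 2] = 3 := by
  have hab' : 0 < a * b - 1 := by linarith
  have hg' : g ^ 2 = a * c * d := by rw [hg, Real.sq_sqrt (by positivity)]
  have he' : e * (a * b - 1) = a * (c + d) * c := by rw [he, div_mul_cancel₀ _ hab'.ne']
  have hf' : f * (a * b - 1) = a * (c + d) * d := by rw [hf, div_mul_cancel₀ _ hab'.ne']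
  have hA := phiA_pos hc hd hab he' hf' hh hk α
  have hE : 0 < phiE e f α := phiE_pos (by rw [he]; positivity) (by rw [hf]; positivity) α
  have hw := phiWeights_pos hA hE
  change (Phi a b c d e f g h k α).PosSemidef ∧ (Phi a b c d e f g h k α).rank = 3
  rw [Phi_eq_conjTranspose_mul_diagonal_mul hA.ne' hE.ne' hg' (mul_phiA_eq he' hf' hh hk α)
    (mul_phiE_eq hh hk α)]
  exact ⟨posSemidef_conjTranspose_mul_diagonal_mul _ fun i ↦ (hw i).le,
    (rank_conjTranspose_mul_diagonal_mul _ hw).trans (rank_phiFactor hA.ne' hE.ne' g c d α)⟩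

/-- For `α ≠ 0, 1`, the matrix `Φ(P_α)` is positive semidefinite of rank exactly 3. -/
theorem PhiPalpha_posSemidef_rank_three (a b c d e f g h k : ℝ)
    (ha : 0 < a) (hb : 0 < b) (hc : 0 < c) (hd : 0 < d) (hab : 1 < a * b)
    (hg : g = Real.sqrt (a * c * d))
    (he : e = a * (c + d) * c / (a * b - 1))
    (hf : f = a * (c + d) * d / (a * b - 1))
    (hh : h = b * e - c ^ 2) (hk : k = b * f - d ^ 2)
    (α : ℂ) (hα0 : α ≠ 0) (hα1 : α ≠ 1) :
    Matrix.PosSemidef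
      !![(h : ℂ) - (c : ℂ) * (d : ℂ) * (α + starRingEnd ℂ α) +
           (k : ℂ) * (‖α‖ : ℂ) ^ 2, -(g : ℂ) + (g : ℂ) * α, 0, 0;
         -(g : ℂ) + (g : ℂ) * starRingEnd ℂ α, (a : ℂ), starRingEnd ℂ α, 0;
         0, α, (b : ℂ) * (‖α‖ : ℂ) ^ 2,
           -(c : ℂ) * starRingEnd ℂ α - (d : ℂ) * (‖α‖ : ℂ) ^ 2;
         0, 0, -(c : ℂ) * α - (d : ℂ) * (‖α‖ : ℂ) ^ 2,
           (e : ℂ) + (f : ℂ) * (‖α‖ : ℂ) ^ 2] ∧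
    Matrix.rank
      !![(h : ℂ) - (c : ℂ) * (d : ℂ) * (α + starRingEnd ℂ α) +
           (k : ℂ) * (‖α‖ : ℂ) ^ 2, -(g : ℂ) + (g : ℂ) * α, 0, 0;
         -(g : ℂ) + (g : ℂ) * starRingEnd ℂ α, (a : ℂ), starRingEnd ℂ α, 0;
         0, α, (b : ℂ) * (‖α‖ : ℂ) ^ 2,
           -(c : ℂ) * starRingEnd ℂ α - (d : ℂ) * (‖α‖ : ℂ) ^ 2;
         0, 0, -(c : ℂ) * α - (d : ℂ) * (‖α‖ : ℂ) ^ 2,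
           (e : ℂ) + (f : ℂ) * (‖α‖ : ℂ) ^ 2] = 3 :=
  PhiPalpha_posSemidef_rank_three_general a b c d e f g h k ha hc hd hab hg he hf hh hk α
end

section
/- The linear map Φ[a,b,c,d] : M₂(ℂ) → M₄(ℂ) is a positive map: it sends every positive semidefinite 2×2 matrix to a positive semidefinite 4×4 matrix. -/
open ComplexOrder

set_option maxHeartbeats 2000000

private lemma tridiag (A P B F u1 u2 t1 t2 w1 w2 x0 y0 x1 y1 x2 y2 x3 y3 : ℝ)
    (hA : 0 < A) (hF : 0 < F) (hN1 : 0 < A * P - (u1^2 + u2^2))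
    (hS : 0 ≤ (A * P - (u1^2 + u2^2)) * (F * B - (w1^2 + w2^2)) - A * F * (t1^2 + t2^2)) :
    0 ≤ A*(x0^2+y0^2) + P*(x1^2+y1^2) + B*(x2^2+y2^2) + F*(x3^2+y3^2)
      + 2*(u1*(x0*x1+y0*y1) - u2*(x0*y1-y0*x1))
      + 2*(t1*(x1*x2+y1*y2) - t2*(x1*y2-y1*x2))
      + 2*(w1*(x2*x3+y2*y3) - w2*(x2*y3-y2*x3)) := by
  have hN1' : 0 < A * P - (u1^2 + u2^2) := hN1
  generalize hN1d : A * P - (u1^2 + u2^2) = N1 at hN1' hS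
  set N2 : ℝ := F * B - (w1^2 + w2^2) with hN2d
  have hprod : 0 < A * F * N1 := by positivity
  have h1 : 0 ≤ F*N1*((A*x0+u1*x1-u2*y1)^2+(A*y0+u1*y1+u2*x1)^2) := by positivity
  have h2 : 0 ≤ A*N1*((F*x3+w1*x2+w2*y2)^2+(F*y3+w1*y2-w2*x2)^2) := by positivity
  have h3 : 0 ≤ F*((N1*x1+A*(t1*x2-t2*y2))^2+(N1*y1+A*(t1*y2+t2*x2))^2) := by positivity
  have h4 : 0 ≤ A*(N1*N2 - A*F*(t1^2+t2^2))*(x2^2+y2^2) :=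
    mul_nonneg (mul_nonneg hA.le hS) (by positivity)
  have key : A*F*N1*(A*(x0^2+y0^2) + P*(x1^2+y1^2) + B*(x2^2+y2^2) + F*(x3^2+y3^2)
      + 2*(u1*(x0*x1+y0*y1) - u2*(x0*y1-y0*x1))
      + 2*(t1*(x1*x2+y1*y2) - t2*(x1*y2-y1*x2))
      + 2*(w1*(x2*x3+y2*y3) - w2*(x2*y3-y2*x3)))
      = F*N1*((A*x0+u1*x1-u2*y1)^2+(A*y0+u1*y1+u2*x1)^2)
            + A*N1*((F*x3+w1*x2+w2*y2)^2+(F*y3+w1*y2-w2*x2)^2)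
            + F*((N1*x1+A*(t1*x2-t2*y2))^2+(N1*y1+A*(t1*y2+t2*x2))^2)
            + A*(N1*N2 - A*F*(t1^2+t2^2))*(x2^2+y2^2) := by
    rw [← hN1d, hN2d]; ring
  nlinarith [key, hprod, h1, h2, h3, h4]

private lemma spec_strict (a b c d e f g h k p q sr si x0 y0 x1 y1 x2 y2 x3 y3 : ℝ)
    (ha : 0 < a) (hb : 0 < b) (hc : 0 < c) (hd : 0 < d) (hD : 0 < a*b - 1)
    (hg2 : g^2 = a*c*d)
    (he : e*(a*b-1) = a*(c+d)*c) (hf : f*(a*b-1) = a*(c+d)*d)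
    (hh : h*(a*b-1) = c*(a*b*d+c)) (hk : k*(a*b-1) = d*(a*b*c+d))
    (hbe : b*e = h + c^2) (hbf : b*f = k + d^2)
    (hp : 0 < p) (hq : 0 < q) (hs : sr^2+si^2 ≤ p*q) :
    0 ≤ (h*p - 2*(c*d)*sr + k*q)*(x0^2+y0^2) + (a*p)*(x1^2+y1^2) + (b*q)*(x2^2+y2^2)
      + (e*p+f*q)*(x3^2+y3^2)
      + 2*((g*(sr-p))*(x0*x1+y0*y1) - (-(g*si))*(x0*y1-y0*x1))
      + 2*(sr*(x1*x2+y1*y2) - (-si)*(x1*y2-y1*x2))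
      + 2*((-(c*sr+d*q))*(x2*x3+y2*y3) - (c*si)*(x2*y3-y2*x3)) := by
  have hR : 0 ≤ p*q - sr^2 - si^2 := by linarith
  have h2sr : 0 ≤ p + q - 2*sr := by
    by_contra hcon
    push_neg at hcon
    nlinarith [sq_nonneg (p-q), hs, sq_nonneg si,
      mul_pos (show (0:ℝ) < 2*sr - p - q by linarith) (show (0:ℝ) < 2*sr + p + q by linarith)]
  have hAD : (h*p - 2*(c*d)*sr + k*q)*(a*b-1)
      = c*(c+d)*p + d*(c+d)*q + c*d*(a*b-1)*(p+q-2*sr) := by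
    linear_combination p*hh + q*hk
  have hApos : 0 < h*p - 2*(c*d)*sr + k*q := by
    refine (mul_pos_iff_of_pos_right hD).mp ?_
    rw [hAD]
    have h0 : 0 ≤ c*d*(a*b-1)*(p+q-2*sr) := by positivity
    have h1 : 0 < c*(c+d)*p := mul_pos (mul_pos hc (add_pos hc hd)) hp
    have h2 : 0 < d*(c+d)*q := mul_pos (mul_pos hd (add_pos hc hd)) hq
    linarith
  have hepos : 0 < e := by
    refine (mul_pos_iff_of_pos_right hD).mp ?_
    rw [he]; positivity
  have hfpos : 0 < f := by
    refine (mul_pos_iff_of_pos_right hD).mp ?_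
    rw [hf]; positivity
  have hFpos : 0 < e*p + f*q := by positivity
  have hN1D : ((h*p - 2*(c*d)*sr + k*q)*(a*p) - ((g*(sr-p))^2 + (-(g*si))^2))*(a*b-1)
      = a*((c+d)*p*(c*p+d*q) + c*d*(a*b-1)*(p*q-sr^2-si^2)) := by
    linear_combination (a*p*p)*hh + (a*p*q)*hk - (a*b-1)*((sr-p)^2+si^2)*hg2
  have hN1pos : 0 < (h*p - 2*(c*d)*sr + k*q)*(a*p) - ((g*(sr-p))^2 + (-(g*si))^2) := by
    refine (mul_pos_iff_of_pos_right hD).mp ?_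
    rw [hN1D]
    have h1 : 0 < (c+d)*p*(c*p+d*q) := by positivity
    have h2 : 0 ≤ c*d*(a*b-1)*(p*q-sr^2-si^2) := by positivity
    exact mul_pos ha (by linarith)
  have hN2id : (e*p+f*q)*(b*q) - ((-(c*sr+d*q))^2 + (c*si)^2)
      = q*(h*p - 2*(c*d)*sr + k*q) + c^2*(p*q-sr^2-si^2) := by
    linear_combination (p*q)*hbe + (q*q)*hbf
  have hFD : (e*p+f*q)*(a*b-1) = a*(c+d)*(c*p+d*q) := by
    linear_combination p*he + q*hf
  have hSD : (((h*p - 2*(c*d)*sr + k*q)*(a*p) - ((g*(sr-p))^2 + (-(g*si))^2))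
        * ((e*p+f*q)*(b*q) - ((-(c*sr+d*q))^2 + (c*si)^2))
        - (h*p - 2*(c*d)*sr + k*q)*(e*p+f*q)*(sr^2+(-si)^2)) * (a*b-1)
      = (p*q-sr^2-si^2) * a * ((c+d)*(c*p+d*q)*((h*p - 2*(c*d)*sr + k*q) + p*c^2)
        + c*d*(a*b-1)*(q*(h*p - 2*(c*d)*sr + k*q) + c^2*(p*q-sr^2-si^2))) := by
    linear_combination
      ((e*p+f*q)*(b*q) - ((-(c*sr+d*q))^2 + (c*si)^2)) * hN1D
      + (a*((c+d)*p*(c*p+d*q) + c*d*(a*b-1)*(p*q-sr^2-si^2))) * hN2id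
      - (h*p - 2*(c*d)*sr + k*q)*(sr^2+si^2) * hFD
  have hS : 0 ≤ ((h*p - 2*(c*d)*sr + k*q)*(a*p) - ((g*(sr-p))^2 + (-(g*si))^2))
        * ((e*p+f*q)*(b*q) - ((-(c*sr+d*q))^2 + (c*si)^2))
        - (h*p - 2*(c*d)*sr + k*q)*(e*p+f*q)*(sr^2+(-si)^2) := by
    refine (mul_nonneg_iff_of_pos_right hD).mp ?_
    rw [hSD]
    have h1 : 0 ≤ (c+d)*(c*p+d*q)*((h*p - 2*(c*d)*sr + k*q) + p*c^2) := by
      apply mul_nonneg (by positivity)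
      have := mul_nonneg hp.le (sq_nonneg c)
      linarith
    have h2 : 0 ≤ c*d*(a*b-1)*(q*(h*p - 2*(c*d)*sr + k*q) + c^2*(p*q-sr^2-si^2)) := by
      apply mul_nonneg (by positivity)
      have h3 := mul_nonneg hq.le hApos.le
      have h4 : 0 ≤ c^2*(p*q-sr^2-si^2) := mul_nonneg (sq_nonneg c) hR
      linarith
    exact mul_nonneg (mul_nonneg hR ha.le) (by linarith)
  exact tridiag _ _ _ _ _ _ _ _ _ _ _ _ _ _ _ _ _ _ hApos hFpos hN1pos hS

private lemma spec_real (a b c d e f g h k p q sr si x0 y0 x1 y1 x2 y2 x3 y3 : ℝ)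
    (ha : 0 < a) (hb : 0 < b) (hc : 0 < c) (hd : 0 < d) (hD : 0 < a*b - 1)
    (hg2 : g^2 = a*c*d)
    (he : e*(a*b-1) = a*(c+d)*c) (hf : f*(a*b-1) = a*(c+d)*d)
    (hh : h*(a*b-1) = c*(a*b*d+c)) (hk : k*(a*b-1) = d*(a*b*c+d))
    (hbe : b*e = h + c^2) (hbf : b*f = k + d^2)
    (hp : 0 ≤ p) (hq : 0 ≤ q) (hs : sr^2+si^2 ≤ p*q) :
    0 ≤ (h*p - 2*(c*d)*sr + k*q)*(x0^2+y0^2) + (a*p)*(x1^2+y1^2) + (b*q)*(x2^2+y2^2)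
      + (e*p+f*q)*(x3^2+y3^2)
      + 2*((g*(sr-p))*(x0*x1+y0*y1) - (-(g*si))*(x0*y1-y0*x1))
      + 2*(sr*(x1*x2+y1*y2) - (-si)*(x1*y2-y1*x2))
      + 2*((-(c*sr+d*q))*(x2*x3+y2*y3) - (c*si)*(x2*y3-y2*x3)) := by
  set Q : ℝ := (h*p - 2*(c*d)*sr + k*q)*(x0^2+y0^2) + (a*p)*(x1^2+y1^2) + (b*q)*(x2^2+y2^2)
      + (e*p+f*q)*(x3^2+y3^2)
      + 2*((g*(sr-p))*(x0*x1+y0*y1) - (-(g*si))*(x0*y1-y0*x1))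
      + 2*(sr*(x1*x2+y1*y2) - (-si)*(x1*y2-y1*x2))
      + 2*((-(c*sr+d*q))*(x2*x3+y2*y3) - (c*si)*(x2*y3-y2*x3)) with hQ
  set C : ℝ := (h+k)*(x0^2+y0^2) + a*(x1^2+y1^2) + b*(x2^2+y2^2) + (e+f)*(x3^2+y3^2)
      - 2*g*(x0*x1+y0*y1) - 2*d*(x2*x3+y2*y3) with hC
  have key : ∀ ε : ℝ, 0 < ε → 0 ≤ Q + ε * C := by
    intro ε hε
    have h1 : sr^2+si^2 ≤ (p+ε)*(q+ε) := by
      nlinarith [mul_nonneg hp hε.le, mul_nonneg hq hε.le, sq_nonneg ε]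
    have h2 := spec_strict a b c d e f g h k (p+ε) (q+ε) sr si x0 y0 x1 y1 x2 y2 x3 y3
      ha hb hc hd hD hg2 he hf hh hk hbe hbf (by linarith) (by linarith) h1
    have h3 : (h*(p+ε) - 2*(c*d)*sr + k*(q+ε))*(x0^2+y0^2) + (a*(p+ε))*(x1^2+y1^2)
      + (b*(q+ε))*(x2^2+y2^2) + (e*(p+ε)+f*(q+ε))*(x3^2+y3^2)
      + 2*((g*(sr-(p+ε)))*(x0*x1+y0*y1) - (-(g*si))*(x0*y1-y0*x1))
      + 2*(sr*(x1*x2+y1*y2) - (-si)*(x1*y2-y1*x2))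
      + 2*((-(c*sr+d*(q+ε)))*(x2*x3+y2*y3) - (c*si)*(x2*y3-y2*x3)) = Q + ε * C := by
      rw [hQ, hC]; ring
    linarith [h2, h3.symm.le, h3.le]
  rcases le_or_gt C 0 with hC0 | hC0
  · have := key 1 one_pos
    linarith
  · by_contra hcon
    push_neg at hcon
    have hε : 0 < -Q / (2*C) := div_pos (by linarith) (by linarith)
    have h5 := key (-Q / (2*C)) hε
    have h6 : Q + (-Q/(2*C))*C = Q/2 := by
      field_simp; ring
    rw [h6] at h5
    linarith

private lemma psd2_facts (X : Matrix (Fin 2) (Fin 2) ℂ) (hX : X.PosSemidef) :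
    0 ≤ (X 0 0).re ∧ (X 0 0).im = 0 ∧ 0 ≤ (X 1 1).re ∧ (X 1 1).im = 0 ∧
    X 1 0 = (starRingEnd ℂ) (X 0 1) ∧
    ((X 0 1).re)^2 + ((X 0 1).im)^2 ≤ (X 0 0).re * (X 1 1).re := by
  have h10 : X 1 0 = (starRingEnd ℂ) (X 0 1) := (hX.1.apply 1 0).symm
  have h00 := hX.dotProduct_mulVec_nonneg (fun i => if i = 0 then 1 else 0)
  simp [dotProduct, Matrix.mulVec, Fin.sum_univ_two] at h00
  have h11 := hX.dotProduct_mulVec_nonneg (fun i => if i = 0 then 0 else 1)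
  simp [dotProduct, Matrix.mulVec, Fin.sum_univ_two] at h11
  rw [Complex.le_def] at h00 h11
  simp at h00 h11
  refine ⟨h00.1, h00.2.symm, h11.1, h11.2.symm, h10, ?_⟩
  have hvq := hX.dotProduct_mulVec_nonneg ![(X 1 1 : ℂ), -(X 1 0)]
  simp [dotProduct, Matrix.mulVec, Fin.sum_univ_two, h10] at hvq
  rw [Complex.le_def] at hvq
  simp [Complex.mul_re, Complex.mul_im, ← h00.2, ← h11.2] at hvq
  have hvp := hX.dotProduct_mulVec_nonneg ![-(X 0 1), X 0 0]
  simp [dotProduct, Matrix.mulVec, Fin.sum_univ_two, h10] at hvp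
  rw [Complex.le_def] at hvp
  simp [Complex.mul_re, Complex.mul_im, ← h00.2, ← h11.2] at hvp
  have hv0 := hX.dotProduct_mulVec_nonneg ![1, -(X 1 0)]
  simp [dotProduct, Matrix.mulVec, Fin.sum_univ_two, h10] at hv0
  rw [Complex.le_def] at hv0
  simp [Complex.mul_re, Complex.mul_im, ← h00.2, ← h11.2] at hv0
  set p := (X 0 0).re
  set q := (X 1 1).re
  set sr := (X 0 1).re
  set si := (X 0 1).im
  have hq' : 0 ≤ q*(p*q - (sr^2+si^2)) := by linarith [hvq.1]
  have hp' : 0 ≤ p*(p*q - (sr^2+si^2)) := by linarith [hvp.1]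
  have h0' : 0 ≤ p - 2*(sr^2+si^2) + q*(sr^2+si^2) := by linarith [hv0.1]
  rcases eq_or_lt_of_le h11.1 with hq0 | hq0
  · have hE : 0 ≤ sr^2+si^2 := by positivity
    nlinarith [hp', h0', hE, hq0]
  · have := (mul_nonneg_iff_of_pos_left hq0).mp hq'
    linarith

private lemma phi_entry_eq (a b c d e f g h k : ℝ) (X : Matrix (Fin 2) (Fin 2) ℂ)
    (v : Fin 4 → ℂ)
    (hX00 : X 0 0 = ((X 0 0).re : ℂ)) (hX11 : X 1 1 = ((X 1 1).re : ℂ))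
    (hX01 : X 0 1 = ((X 0 1).re : ℂ) + ((X 0 1).im : ℂ)*Complex.I)
    (hX10 : X 1 0 = ((X 0 1).re : ℂ) - ((X 0 1).im : ℂ)*Complex.I) :
    dotProduct (star v) (Matrix.mulVec
        !![(h : ℂ) * X 0 0 - (c : ℂ) * (d : ℂ) * (X 0 1 + X 1 0) + (k : ℂ) * X 1 1,
             -(g : ℂ) * X 0 0 + (g : ℂ) * X 1 0, 0, 0;
           -(g : ℂ) * X 0 0 + (g : ℂ) * X 0 1, (a : ℂ) * X 0 0, X 1 0, 0;
           0, X 0 1, (b : ℂ) * X 1 1, -(c : ℂ) * X 1 0 - (d : ℂ) * X 1 1;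
           0, 0, -(c : ℂ) * X 0 1 - (d : ℂ) * X 1 1,
             (e : ℂ) * X 0 0 + (f : ℂ) * X 1 1] v)
    = (((
      (h*(X 0 0).re - 2*(c*d)*((X 0 1).re) + k*(X 1 1).re)*(((v 0).re)^2+((v 0).im)^2)
      + (a*(X 0 0).re)*(((v 1).re)^2+((v 1).im)^2) + (b*(X 1 1).re)*(((v 2).re)^2+((v 2).im)^2)
      + (e*(X 0 0).re+f*(X 1 1).re)*(((v 3).re)^2+((v 3).im)^2)
      + 2*((g*((X 0 1).re-(X 0 0).re))*((v 0).re*(v 1).re+(v 0).im*(v 1).im)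
           - (-(g*(X 0 1).im))*((v 0).re*(v 1).im-(v 0).im*(v 1).re))
      + 2*((X 0 1).re*((v 1).re*(v 2).re+(v 1).im*(v 2).im)
           - (-(X 0 1).im)*((v 1).re*(v 2).im-(v 1).im*(v 2).re))
      + 2*((-(c*(X 0 1).re+d*(X 1 1).re))*((v 2).re*(v 3).re+(v 2).im*(v 3).im)
           - (c*(X 0 1).im)*((v 2).re*(v 3).im-(v 2).im*(v 3).re))) : ℝ) : ℂ) := by
  have hv : ∀ i : Fin 4, v i = ((v i).re : ℂ) + ((v i).im : ℂ)*Complex.I :=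
    fun i => (Complex.re_add_im (v i)).symm
  simp only [Matrix.mulVec, dotProduct, Fin.sum_univ_four, Pi.star_apply,
    Matrix.cons_val', Matrix.cons_val_zero, Matrix.cons_val_one, Matrix.head_cons,
    Matrix.empty_val', Matrix.cons_val_fin_one, Matrix.head_fin_const, Matrix.of_apply,
    Matrix.cons_val_two, Matrix.cons_val_three, Matrix.tail_cons]
  rw [hX01, hX10, hX00, hX11, hv 0, hv 1, hv 2, hv 3]
  apply Complex.ext <;>
    simp [Complex.add_re, Complex.add_im, Complex.mul_re, Complex.mul_im, Complex.sub_re,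
      Complex.sub_im, Complex.ofReal_re, Complex.ofReal_im, Complex.I_re, Complex.I_im,
      ← Complex.ofReal_pow] <;>
    ring

/-- The map `Φ[a,b,c,d] : M₂(ℂ) → M₄(ℂ)` is positive: it sends every positive
semidefinite 2×2 matrix to a positive semidefinite 4×4 matrix. -/
theorem Phi_is_positive_map (a b c d e f g h k : ℝ)
    (ha : 0 < a) (hb : 0 < b) (hc : 0 < c) (hd : 0 < d) (hab : 1 < a * b)
    (hg : g = Real.sqrt (a * c * d))
    (he : e = a * (c + d) * c / (a * b - 1))
    (hf : f = a * (c + d) * d / (a * b - 1))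
    (hh : h = b * e - c ^ 2) (hk : k = b * f - d ^ 2) :
    ∀ X : Matrix (Fin 2) (Fin 2) ℂ, X.PosSemidef →
      Matrix.PosSemidef
        !![(h : ℂ) * X 0 0 - (c : ℂ) * (d : ℂ) * (X 0 1 + X 1 0) + (k : ℂ) * X 1 1,
             -(g : ℂ) * X 0 0 + (g : ℂ) * X 1 0, 0, 0;
           -(g : ℂ) * X 0 0 + (g : ℂ) * X 0 1, (a : ℂ) * X 0 0, X 1 0, 0;
           0, X 0 1, (b : ℂ) * X 1 1, -(c : ℂ) * X 1 0 - (d : ℂ) * X 1 1;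
           0, 0, -(c : ℂ) * X 0 1 - (d : ℂ) * X 1 1,
             (e : ℂ) * X 0 0 + (f : ℂ) * X 1 1] := by
  intro X hX
  obtain ⟨hp, hp0, hq, hq0, h10, hs⟩ := psd2_facts X hX
  have hD : 0 < a*b - 1 := by linarith
  have hDne : a*b - 1 ≠ 0 := ne_of_gt hD
  have hg2 : g^2 = a*c*d := by
    rw [hg, Real.sq_sqrt (by positivity)]
  have he' : e*(a*b-1) = a*(c+d)*c := by
    rw [he]; field_simp
  have hf' : f*(a*b-1) = a*(c+d)*d := by
    rw [hf]; field_simp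
  have hh' : h*(a*b-1) = c*(a*b*d+c) := by
    rw [hh]; linear_combination b*he'
  have hk' : k*(a*b-1) = d*(a*b*c+d) := by
    rw [hk]; linear_combination b*hf'
  have hbe : b*e = h + c^2 := by rw [hh]; ring
  have hbf : b*f = k + d^2 := by rw [hk]; ring
  have hX00 : X 0 0 = ((X 0 0).re : ℂ) := by
    apply Complex.ext <;> simp [hp0]
  have hX11 : X 1 1 = ((X 1 1).re : ℂ) := by
    apply Complex.ext <;> simp [hq0]
  have hX01 : X 0 1 = ((X 0 1).re : ℂ) + ((X 0 1).im : ℂ)*Complex.I :=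
    (Complex.re_add_im _).symm
  have hX10 : X 1 0 = ((X 0 1).re : ℂ) - ((X 0 1).im : ℂ)*Complex.I := by
    rw [h10]
    apply Complex.ext <;> simp
  refine Matrix.PosSemidef.of_dotProduct_mulVec_nonneg ?_ ?_
  · -- Hermitian
    have hc00 : (starRingEnd ℂ) (X 0 0) = X 0 0 := by
      rw [hX00]; exact Complex.conj_ofReal _
    have hc11 : (starRingEnd ℂ) (X 1 1) = X 1 1 := by
      rw [hX11]; exact Complex.conj_ofReal _
    have hc10 : (starRingEnd ℂ) (X 1 0) = X 0 1 := by rw [h10, Complex.conj_conj]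
    have hc01 : (starRingEnd ℂ) (X 0 1) = X 1 0 := h10.symm
    unfold Matrix.IsHermitian
    ext i j
    fin_cases i <;> fin_cases j
    all_goals
      simp [Matrix.conjTranspose_apply, map_add, map_sub, map_mul, map_neg,
        Complex.conj_ofReal, hc00, hc11, hc10, hc01, Matrix.vecHead, Matrix.vecTail]
    all_goals try (left; exact add_comm _ _)
    all_goals first | rfl | ring
  · -- quadratic form
    intro v
    rw [phi_entry_eq a b c d e f g h k X v hX00 hX11 hX01 hX10]
    rw [Complex.zero_le_real]
    exact spec_real a b c d e f g h k
      ((X 0 0).re) ((X 1 1).re) ((X 0 1).re) ((X 0 1).im)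
      ((v 0).re) ((v 0).im) ((v 1).re) ((v 1).im)
      ((v 2).re) ((v 2).im) ((v 3).re) ((v 3).im)
      ha hb hc hd hD hg2 he' hf' hh' hk' hbe hbf hp hq hs
end

section
/- The vectors {y_α : α ∈ ℂ}, where y_α = (gα(1-α), α[h - cd(α+ᾱ) + k|α|²], -(e + f|α|²), -ᾱ(c + dα))ᵀ, span all of ℂ⁴. -/
/-!
Among the `y_α` already `y_0, y_1, y_i, y_{-i}` are a basis of `ℂ⁴`: their determinant is
`-4i · e g (c + d)(h + k - cd)`. Here `e, g, c + d > 0`, and with the given values of `e, f, h, k`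
one finds `h + k - cd = (abcd + c² + cd + d²) / (ab - 1) > 0`.
-/

open Complex ComplexConjugate Submodule

theorem Matrix.span_range_eq_top_of_det_ne_zero {K n : Type*} [Field K] [Fintype n]
    [DecidableEq n] {A : Matrix n n K} (hA : A.det ≠ 0) : span K (Set.range A) = ⊤ :=
  (linearIndependent_rows_of_det_ne_zero hA).span_eq_top_of_card_eq_finrank' (by simp)

noncomputable def yVec (g e f h k c d α : ℂ) : Fin 4 → ℂ :=
  ![g * α * (1 - α), α * (h - c * d * (α + conj α) + k * ((‖α‖ : ℝ) : ℂ) ^ 2),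
    -(e + f * ((‖α‖ : ℝ) : ℂ) ^ 2), -(conj α) * (c + d * α)]

theorem det_yVec_zero_one_I_neg_I (g e f h k c d : ℂ) :
    (Matrix.of ![yVec g e f h k c d 0, yVec g e f h k c d 1, yVec g e f h k c d I,
      yVec g e f h k c d (-I)]).det = -4 * I * e * g * (c + d) * (h + k - c * d) := by
  simp [Matrix.det_succ_row_zero, Fin.sum_univ_succ, yVec, Fin.succAbove]
  linear_combination (-4 * I * e * g * (c + d) * (h + k - c * d)) * I_sq

theorem span_range_yVec_eq_top {g e f h k c d : ℂ} (hg : g ≠ 0) (he : e ≠ 0) (hcd : c + d ≠ 0)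
    (hhk : h + k - c * d ≠ 0) : span ℂ (Set.range (yVec g e f h k c d)) = ⊤ := by
  let Y := yVec g e f h k c d
  refine eq_top_iff.2 ((Matrix.span_range_eq_top_of_det_ne_zero
    (A := Matrix.of ![Y 0, Y 1, Y I, Y (-I)]) ?_).ge.trans (span_mono ?_))
  · simp [Y, det_yVec_zero_one_I_neg_I, *]
  · rintro _ ⟨i, rfl⟩
    fin_cases i <;> exact ⟨_, rfl⟩

theorem add_sub_mul_pos_of_one_lt_mul {a b c d : ℝ} (hab : 1 < a * b) (hc : 0 < c) (hd : 0 < d) :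
    0 < b * (a * (c + d) * c / (a * b - 1)) - c ^ 2 + (b * (a * (c + d) * d / (a * b - 1)) - d ^ 2)
      - c * d := by
  have hab' : 0 < a * b - 1 := by linarith
  have key : b * (a * (c + d) * c / (a * b - 1)) - c ^ 2 + (b * (a * (c + d) * d / (a * b - 1))
      - d ^ 2) - c * d = (a * b * (c * d) + c ^ 2 + c * d + d ^ 2) / (a * b - 1) := by
    rw [eq_div_iff hab'.ne']
    simp only [sub_mul, add_mul, mul_div_assoc', div_mul_cancel₀ _ hab'.ne']
    ring
  rw [key]
  exact div_pos (by nlinarith [mul_pos hc hd]) hab'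

theorem y_alpha_span_top_general (a b c d e f g h k : ℝ)
    (ha : 0 < a) (hc : 0 < c) (hd : 0 < d) (hab : 1 < a * b)
    (hg : g = Real.sqrt (a * c * d))
    (he : e = a * (c + d) * c / (a * b - 1))
    (hf : f = a * (c + d) * d / (a * b - 1))
    (hh : h = b * e - c ^ 2) (hk : k = b * f - d ^ 2) :
    Submodule.span ℂ
      (Set.range (fun α : ℂ =>
        (![(g : ℂ) * α * (1 - α),
           α * ((h : ℂ) - (c : ℂ) * (d : ℂ) * (α + starRingEnd ℂ α) +
             (k : ℂ) * ((‖α‖ : ℝ) : ℂ) ^ 2),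
           -((e : ℂ) + (f : ℂ) * ((‖α‖ : ℝ) : ℂ) ^ 2),
           -(starRingEnd ℂ α) * ((c : ℂ) + (d : ℂ) * α)] : Fin 4 → ℂ))) = ⊤ := by
  have hg₀ : 0 < g := hg ▸ Real.sqrt_pos.2 (by positivity)
  have he₀ : 0 < e := he ▸ div_pos (by positivity) (by linarith)
  have hhk : 0 < h + k - c * d := by
    subst hh hk he hf
    exact add_sub_mul_pos_of_one_lt_mul hab hc hd
  refine span_range_yVec_eq_top ?_ ?_ ?_ ?_ <;> norm_cast <;> positivity

/-- The vectors `y_α`, `α ∈ ℂ`, span all of `ℂ⁴`. -/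
theorem y_alpha_span_top (a b c d e f g h k : ℝ)
    (ha : 0 < a) (hb : 0 < b) (hc : 0 < c) (hd : 0 < d) (hab : 1 < a * b)
    (hg : g = Real.sqrt (a * c * d))
    (he : e = a * (c + d) * c / (a * b - 1))
    (hf : f = a * (c + d) * d / (a * b - 1))
    (hh : h = b * e - c ^ 2) (hk : k = b * f - d ^ 2) :
    Submodule.span ℂ
      (Set.range (fun α : ℂ =>
        (![(g : ℂ) * α * (1 - α),
           α * ((h : ℂ) - (c : ℂ) * (d : ℂ) * (α + starRingEnd ℂ α) +
             (k : ℂ) * ((‖α‖ : ℝ) : ℂ) ^ 2),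
           -((e : ℂ) + (f : ℂ) * ((‖α‖ : ℝ) : ℂ) ^ 2),
           -(starRingEnd ℂ α) * ((c : ℂ) + (d : ℂ) * α)] : Fin 4 → ℂ))) = ⊤ :=
  y_alpha_span_top_general a b c d e f g h k ha hc hd hab hg he hf hh hk
end

section
/- With the setup of Φ[a,b,c,d], the set of product vectors {x_α ⊗ y_α : α ∈ ℂ} spans all of ℂ² ⊗ ℂ⁴ ≅ ℂ⁸, where x_α = (1, ᾱ)ᵀ. -/
/-!
A family of vectors spans `ℂ⁸` as soon as its eight coordinate functions are linearly
independent. Each coordinate of `x_α ⊗ y_α` is a polynomial in `α` and `ᾱ` of bidegree at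
most `(2, 2)`, and the monomials `α ^ m * ᾱ ^ n` are linearly independent functions on `ℂ`:
substituting `α = x + i y` turns a polynomial in `(α, ᾱ)` into one in `(x, y)` vanishing on
`ℝ²`. In the monomial basis the eight coordinates have a triangular coefficient matrix, up to
one `2 × 2` block of determinant `g (h - c d)`, and its pivots `c, e, f, g, k, h - c d` are
positive for `Φ[a,b,c,d]`.
-/

open MvPolynomial ComplexConjugate

theorem MvPolynomial.eq_zero_of_forall_aeval_conj_eq_zero {Q : MvPolynomial (Fin 2) ℂ}
    (hQ : ∀ z : ℂ, aeval ![z, conj z] Q = 0) : Q = 0 := by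
  set R : MvPolynomial (Fin 2) ℂ := aeval ![X 0 + Complex.I • X 1, X 0 - Complex.I • X 1] Q
  have aeval_R (x y : ℂ) : aeval ![x, y] R = aeval ![x + Complex.I * y, x - Complex.I * y] Q := by
    rw [← AlgHom.comp_apply, comp_aeval]
    congr 2
    ext i
    fin_cases i <;> simp
  have hR : R = 0 := by
    refine funext_set (fun _ ↦ Set.range ((↑) : ℝ → ℂ))
      (fun _ ↦ Set.infinite_range_of_injective Complex.ofReal_injective) fun x hx ↦ ?_
    obtain ⟨a, ha⟩ := hx 0 trivial
    obtain ⟨b, hb⟩ := hx 1 trivial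
    have hx : x = ![(a : ℂ), b] := by ext i; fin_cases i <;> simp [ha, hb]
    show aeval x R = aeval x 0
    rw [hx, aeval_R, map_zero]
    simpa [Complex.conj_ofReal, sub_eq_add_neg] using hQ (a + Complex.I * b)
  -- every point of `ℂ²` has the form `(x + i y, x - i y)` with `x, y : ℂ`
  refine MvPolynomial.funext fun x ↦ ?_
  have hx : x = ![(x 0 + x 1) / 2 + Complex.I * ((x 0 - x 1) / (2 * Complex.I)),
      (x 0 + x 1) / 2 - Complex.I * ((x 0 - x 1) / (2 * Complex.I))] := by
    ext i; fin_cases i <;> field_simp <;> simp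
  show aeval x Q = aeval x 0
  rw [hx, ← aeval_R, hR, map_zero, map_zero]

theorem Complex.linearIndependent_pow_mul_conj_pow :
    LinearIndependent ℂ (fun mn : ℕ × ℕ ↦ fun z : ℂ ↦ z ^ mn.1 * conj z ^ mn.2) := by
  let evalConj : MvPolynomial (Fin 2) ℂ →ₗ[ℂ] ℂ → ℂ :=
    LinearMap.pi fun z ↦ (aeval ![z, conj z]).toLinearMap
  have hmono : LinearIndependent ℂ
      (fun mn : ℕ × ℕ ↦ (X 0 ^ mn.1 * X 1 ^ mn.2 : MvPolynomial (Fin 2) ℂ)) := by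
    simp only [X_pow_eq_monomial, monomial_mul, mul_one]
    refine (basisMonomials (Fin 2) ℂ).linearIndependent.comp _ fun mn mn' h ↦ ?_
    exact Prod.ext (by simpa using congrArg (· 0) h) (by simpa using congrArg (· 1) h)
  have hker : LinearMap.ker evalConj = ⊥ := LinearMap.ker_eq_bot'.mpr fun Q hQ ↦
    eq_zero_of_forall_aeval_conj_eq_zero fun z ↦ congrFun hQ z
  have hcomp : (fun mn : ℕ × ℕ ↦ fun z : ℂ ↦ z ^ mn.1 * conj z ^ mn.2) =
      evalConj ∘ fun mn ↦ X 0 ^ mn.1 * X 1 ^ mn.2 := by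
    funext mn z
    simp [evalConj]
  rw [hcomp]
  exact hmono.map' evalConj hker

open Submodule Set in
theorem Submodule.span_range_eq_top_of_linearIndependent_apply {K ι κ : Type*} [Field K]
    [Fintype κ] (v : ι → κ → K) (hv : LinearIndependent K fun p i ↦ v i p) :
    span K (range v) = ⊤ := by
  classical
  by_contra hne
  obtain ⟨φ, hφ0, hφ⟩ :=
    exists_dual_map_eq_bot_of_lt_top (lt_top_iff_ne_top.mpr hne) inferInstance
  have hφv (i : ι) : φ (v i) = 0 := by
    have := mem_map_of_mem (f := φ) (subset_span (mem_range_self (f := v) i))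
    rwa [hφ, mem_bot] at this
  have hφbasis := Fintype.linearIndependent_iff.mp hv
    (fun p ↦ φ fun j ↦ if p = j then 1 else 0) <| by
      funext i
      simpa [LinearMap.pi_apply_eq_sum_univ φ (v i), mul_comm] using hφv i
  refine hφ0 ((Pi.basisFun K κ).ext fun p ↦ ?_)
  rw [Pi.basisFun_apply, LinearMap.zero_apply, ← hφbasis p]
  congr 1
  funext j
  simp [Pi.single_apply, eq_comm]

noncomputable def productVector (c d e f g h k α : ℂ) : Fin 2 × Fin 4 → ℂ := fun p ↦
  (![1, conj α] : Fin 2 → ℂ) p.1 *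
    (![g * α * (1 - α), α * (h - c * d * (α + conj α) + k * ((‖α‖ : ℝ) : ℂ) ^ 2),
      -(e + f * ((‖α‖ : ℝ) : ℂ) ^ 2), -conj α * (c + d * α)] : Fin 4 → ℂ) p.2

theorem linearIndependent_productVector_apply {c d e f g h k : ℂ} (hc : c ≠ 0) (he : e ≠ 0)
    (hf : f ≠ 0) (hg : g ≠ 0) (hk : k ≠ 0) (hhcd : h - c * d ≠ 0) :
    LinearIndependent ℂ fun p α ↦ productVector c d e f g h k α p := by
  rw [Fintype.linearIndependent_iff]
  intro P hP
  have hmonomials := Fintype.linearIndependent_iff.mp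
    (Complex.linearIndependent_pow_mul_conj_pow.comp _
      (Fin.val_injective.prodMap Fin.val_injective : Function.Injective
        (Prod.map Fin.val Fin.val : Fin 3 × Fin 3 → ℕ × ℕ)))
    -- entry `(m, n)` is the coefficient of `α ^ m * ᾱ ^ n` in `∑ p, P p * productVector … α p`
    (fun mn ↦ !![-e * P (0, 2), -c * P (0, 3) - e * P (1, 2), -c * P (1, 3);
      g * P (0, 0) + h * P (0, 1),
        -c * d * P (0, 1) - f * P (0, 2) - d * P (0, 3) + g * P (1, 0) + h * P (1, 1),
        -c * d * P (1, 1) - f * P (1, 2) - d * P (1, 3);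
      -g * P (0, 0) - c * d * P (0, 1), k * P (0, 1) - g * P (1, 0) - c * d * P (1, 1),
        k * P (1, 1)]
      mn.1 mn.2) <| by
    funext α
    have hα := congrFun hP α
    have hnorm : ((‖α‖ : ℝ) : ℂ) ^ 2 = α * conj α := by
      rw [← Complex.ofReal_pow, Complex.sq_norm, Complex.mul_conj]
    simp only [productVector, hnorm, Fintype.sum_prod_type, Fin.sum_univ_two, Fin.sum_univ_three,
      Fin.sum_univ_four, Finset.sum_apply, Pi.smul_apply, smul_eq_mul, Pi.zero_apply,
      Matrix.of_apply, Matrix.cons_val_zero, Matrix.cons_val_one, Matrix.cons_val_two,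
      Matrix.cons_val_three, Function.comp_apply, Prod.map_fst, Prod.map_snd, Fin.val_zero,
      Matrix.head_cons, Matrix.tail_cons, Fin.val_one, Fin.val_two, pow_zero, pow_one] at hα ⊢
    linear_combination hα
  have p11 : P (1, 1) = 0 := by simpa [hk] using hmonomials (2, 2)
  have p02 : P (0, 2) = 0 := by simpa [he] using hmonomials (0, 0)
  have p13 : P (1, 3) = 0 := by simpa [hc] using hmonomials (0, 2)
  have p12 : P (1, 2) = 0 := by simpa [hf, p11, p13] using hmonomials (1, 2)
  have p03 : P (0, 3) = 0 := by simpa [hc, p12] using hmonomials (0, 1)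
  have p01 : P (0, 1) = 0 := by
    have hlin : g * P (0, 0) + h * P (0, 1) = 0 := by simpa using hmonomials (1, 0)
    have hquad : -g * P (0, 0) - c * d * P (0, 1) = 0 := by simpa using hmonomials (2, 0)
    have hblock : (h - c * d) * P (0, 1) = 0 := by linear_combination hlin + hquad
    exact (mul_eq_zero.mp hblock).resolve_left hhcd
  have p00 : P (0, 0) = 0 := by simpa [hg, p01] using hmonomials (1, 0)
  have p10 : P (1, 0) = 0 := by simpa [hg, p01, p11] using hmonomials (2, 1)
  rintro ⟨i, j⟩
  fin_cases i <;> fin_cases j <;> assumption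

theorem product_vectors_span_top_general (a b c d e f g h k : ℝ)
    (ha : 0 < a) (hc : 0 < c) (hd : 0 < d) (hab : 1 < a * b)
    (hg : g = Real.sqrt (a * c * d))
    (he : e = a * (c + d) * c / (a * b - 1))
    (hf : f = a * (c + d) * d / (a * b - 1))
    (hh : h = b * e - c ^ 2) (hk : k = b * f - d ^ 2) :
    Submodule.span ℂ
      (Set.range (fun α : ℂ => fun p : Fin 2 × Fin 4 =>
        (![1, starRingEnd ℂ α] : Fin 2 → ℂ) p.1 *
        (![(g : ℂ) * α * (1 - α),
           α * ((h : ℂ) - (c : ℂ) * (d : ℂ) * (α + starRingEnd ℂ α) +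
             (k : ℂ) * ((‖α‖ : ℝ) : ℂ) ^ 2),
           -((e : ℂ) + (f : ℂ) * ((‖α‖ : ℝ) : ℂ) ^ 2),
           -(starRingEnd ℂ α) * ((c : ℂ) + (d : ℂ) * α)] : Fin 4 → ℂ) p.2)) = ⊤ := by
  have hab1 : 0 < a * b - 1 := by linarith
  have he' : e * (a * b - 1) = a * (c + d) * c := by rw [he, div_mul_cancel₀ _ hab1.ne']
  have hf' : f * (a * b - 1) = a * (c + d) * d := by rw [hf, div_mul_cancel₀ _ hab1.ne']
  have hk' : k = d * ((a * b - 1) * c + c + d) / (a * b - 1) := by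
    rw [eq_div_iff hab1.ne', hk]; linear_combination b * hf'
  have hhcd : h - c * d = c * (c + d) / (a * b - 1) := by
    rw [eq_div_iff hab1.ne', hh]; linear_combination b * he'
  have he0 : 0 < e := by rw [he]; positivity
  have hf0 : 0 < f := by rw [hf]; positivity
  have hg0 : 0 < g := by rw [hg]; positivity
  have hk0 : 0 < k := by rw [hk']; positivity
  have hhcd0 : 0 < h - c * d := by rw [hhcd]; positivity
  refine Submodule.span_range_eq_top_of_linearIndependent_apply _
    (linearIndependent_productVector_apply (d := d) (h := h) ?_ ?_ ?_ ?_ ?_ ?_) <;>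
    norm_cast <;> positivity

/-- The product vectors `x_α ⊗ y_α`, `α ∈ ℂ`, span all of `ℂ² ⊗ ℂ⁴ ≅ ℂ⁸`. -/
theorem product_vectors_span_top (a b c d e f g h k : ℝ)
    (ha : 0 < a) (hb : 0 < b) (hc : 0 < c) (hd : 0 < d) (hab : 1 < a * b)
    (hg : g = Real.sqrt (a * c * d))
    (he : e = a * (c + d) * c / (a * b - 1))
    (hf : f = a * (c + d) * d / (a * b - 1))
    (hh : h = b * e - c ^ 2) (hk : k = b * f - d ^ 2) :
    Submodule.span ℂ
      (Set.range (fun α : ℂ => fun p : Fin 2 × Fin 4 =>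
        (![1, starRingEnd ℂ α] : Fin 2 → ℂ) p.1 *
        (![(g : ℂ) * α * (1 - α),
           α * ((h : ℂ) - (c : ℂ) * (d : ℂ) * (α + starRingEnd ℂ α) +
             (k : ℂ) * ((‖α‖ : ℝ) : ℂ) ^ 2),
           -((e : ℂ) + (f : ℂ) * ((‖α‖ : ℝ) : ℂ) ^ 2),
           -(starRingEnd ℂ α) * ((c : ℂ) + (d : ℂ) * α)] : Fin 4 → ℂ) p.2)) = ⊤ :=
  product_vectors_span_top_general a b c d e f g h k ha hc hd hab hg he hf hh hk
end

section
/- Fix r > 0 and the setup of Φ[a,b,c,d]. The ℂ-linear span of the set P_r = {x_α ⊗ y_α : |α| = r} is exactly 5-dimensional. -/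
/-!
On the circle `|α| = r` we have `ᾱ = r² / α`, so `α² • (x_α ⊗ y_α)` is a polynomial of degree at
most `4` in `α` with vector coefficients `w₀, …, w₄`. Since the circle is infinite, the
Vandermonde determinant shows that the span of the values of `∑ αʲ • wⱼ` is the span of the
`wⱼ`; these are linearly independent because five of their coordinates form a triangular system
with diagonal entries `-c r⁴, -(e + f r²) r², -(e + f r²), -g r², -g`, all nonzero.
-/

open Submodule

section PowerSpan

variable {K V : Type*} [Field K] [AddCommGroup V] [Module K V]

theorem span_image_powers_eq_top {S : Set K} (hS : S.Infinite) (n : ℕ) :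
    span K ((fun α (j : Fin n) => α ^ (j : ℕ)) '' S) = ⊤ := by
  let A : Fin n → K := fun j => hS.natEmbedding S j
  have hA : Function.Injective A := fun i j hij =>
    Fin.val_injective ((hS.natEmbedding S).injective (Subtype.val_injective hij))
  have hli : LinearIndependent K (Matrix.vandermonde A) :=
    Matrix.linearIndependent_rows_iff_isUnit.mpr <| (Matrix.isUnit_iff_isUnit_det _).mpr <|
      (Matrix.det_vandermonde_ne_zero_iff.mpr hA).isUnit
  refine eq_top_iff.mpr ((hli.span_eq_top_of_card_eq_finrank' (by simp)).ge.trans (span_mono ?_))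
  rintro _ ⟨j, rfl⟩
  exact ⟨A j, (hS.natEmbedding S j).2, rfl⟩

theorem span_image_sum_pow_smul {S : Set K} (hS : S.Infinite) {n : ℕ} (W : Fin n → V) :
    span K ((fun α => ∑ j : Fin n, α ^ (j : ℕ) • W j) '' S) = span K (Set.range W) := by
  have : (fun α => ∑ j : Fin n, α ^ (j : ℕ) • W j) =
      Fintype.linearCombination K W ∘ fun α j => α ^ (j : ℕ) := by
    ext α; simp [Fintype.linearCombination_apply]
  rw [this, Set.image_comp, ← map_span, span_image_powers_eq_top hS, Submodule.map_top,
    Fintype.range_linearCombination]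

theorem span_image_smul_of_ne_zero {ι : Type*} (u : ι → K) (v : ι → V) {s : Set ι}
    (hu : ∀ i ∈ s, u i ≠ 0) : span K ((fun i => u i • v i) '' s) = span K (v '' s) := by
  apply le_antisymm <;> rw [span_le] <;> rintro _ ⟨i, hi, rfl⟩
  · exact smul_mem _ _ (subset_span ⟨i, hi, rfl⟩)
  · rw [← inv_smul_smul₀ (hu i hi) (v i)]
    exact smul_mem _ _ (subset_span ⟨i, hi, rfl⟩)

end PowerSpan

theorem Complex.sphere_infinite {r : ℝ} (hr : 0 < r) (x : ℂ) : (Metric.sphere x r).Infinite :=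
  (isPreconnected_sphere (by simp [Complex.rank_real_complex]) x r).infinite_of_nontrivial
    ⟨x + r, by simp [hr.le], x - r, by simp [hr.le], fun h => by
      linarith [show x.re + r = x.re - r by simpa using congrArg Complex.re h]⟩

/-- `x_α ⊗ y_α`, indexed by `Fin 2 × Fin 4`. -/
noncomputable def xyTensor (c d e f g h k : ℝ) (α : ℂ) : Fin 2 × Fin 4 → ℂ := fun p =>
  (![1, starRingEnd ℂ α] : Fin 2 → ℂ) p.1 *
  (![(g : ℂ) * α * (1 - α),
     α * ((h : ℂ) - (c : ℂ) * (d : ℂ) * (α + starRingEnd ℂ α) + (k : ℂ) * (‖α‖ : ℂ) ^ 2),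
     -((e : ℂ) + (f : ℂ) * (‖α‖ : ℂ) ^ 2),
     -(starRingEnd ℂ α) * ((c : ℂ) + (d : ℂ) * α)] : Fin 4 → ℂ) p.2

/-- The coefficient of `α ^ (j - 2)` in `xyTensor … α` on the circle `‖α‖ = r`. -/
def xyTensorCoeff (c d e f g h k r : ℝ) : Fin 5 → Fin 2 × Fin 4 → ℂ := fun j p =>
  (![![![0, 0, 0, 0],
      ![0, 0, 0, -c * r ^ 4]],
    ![![0, 0, 0, -c * r ^ 2],
      ![0, -c * d * r ^ 4, -(e + f * r ^ 2) * r ^ 2, -d * r ^ 4]],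
    ![![0, -c * d * r ^ 2, -(e + f * r ^ 2), -d * r ^ 2],
      ![g * r ^ 2, (h + k * r ^ 2) * r ^ 2, 0, 0]],
    ![![g, h + k * r ^ 2, 0, 0],
      ![-g * r ^ 2, -c * d * r ^ 2, 0, 0]],
    ![![-g, -c * d, 0, 0],
      ![0, 0, 0, 0]]] : Fin 5 → Fin 2 → Fin 4 → ℂ) j p.1 p.2

section XYTensor

variable {c d e f g h k r : ℝ}

theorem xyTensor_eq_smul_sum {α : ℂ} (hα0 : α ≠ 0) (hα : ‖α‖ = r) :
    xyTensor c d e f g h k α =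
      (α ^ 2)⁻¹ • ∑ j : Fin 5, α ^ (j : ℕ) • xyTensorCoeff c d e f g h k r j := by
  have hconj : starRingEnd ℂ α = (r : ℂ) ^ 2 / α := by
    rw [eq_div_iff hα0, mul_comm, Complex.mul_conj', hα]
  ext ⟨i, l⟩
  fin_cases i <;> fin_cases l <;>
    simp [xyTensor, xyTensorCoeff, hα, hconj, Fin.sum_univ_five] <;>
    field_simp <;> ring

theorem linearIndependent_xyTensorCoeff (hc : c ≠ 0) (hg : g ≠ 0) (hr : r ≠ 0)
    (hef : e + f * r ^ 2 ≠ 0) : LinearIndependent ℂ (xyTensorCoeff c d e f g h k r) := by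
  have hc' : (c : ℂ) ≠ 0 := by exact_mod_cast hc
  have hg' : (g : ℂ) ≠ 0 := by exact_mod_cast hg
  have hr' : (r : ℂ) ≠ 0 := by exact_mod_cast hr
  have hef' : (e : ℂ) + f * r ^ 2 ≠ 0 := by exact_mod_cast hef
  rw [Fintype.linearIndependent_iff]
  intro t ht
  -- the coordinates (1,2), (1,3), (0,2), (1,0), (0,0) form a triangular system
  have h12 : t 1 * (-(e + f * r ^ 2) * r ^ 2) = 0 := by
    simpa [xyTensorCoeff, Fin.sum_univ_five] using congrFun ht (1, 2)
  have h13 : t 0 * (-c * r ^ 4) + t 1 * (-d * r ^ 4) = 0 := by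
    simpa [xyTensorCoeff, Fin.sum_univ_five] using congrFun ht (1, 3)
  have h02 : t 2 * -(e + f * r ^ 2) = 0 := by
    simpa [xyTensorCoeff, Fin.sum_univ_five] using congrFun ht (0, 2)
  have h10 : t 2 * (g * r ^ 2) + t 3 * (-g * r ^ 2) = 0 := by
    simpa [xyTensorCoeff, Fin.sum_univ_five] using congrFun ht (1, 0)
  have h00 : t 3 * g + t 4 * -g = 0 := by
    simpa [xyTensorCoeff, Fin.sum_univ_five] using congrFun ht (0, 0)
  have t1 : t 1 = 0 :=
    (mul_eq_zero.mp h12).resolve_right (mul_ne_zero (neg_ne_zero.mpr hef') (pow_ne_zero 2 hr'))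
  have t0 : t 0 = 0 := by simpa [t1, hc', hr'] using h13
  have t2 : t 2 = 0 := (mul_eq_zero.mp h02).resolve_right (neg_ne_zero.mpr hef')
  have t3 : t 3 = 0 := by simpa [t2, hg', hr'] using h10
  have t4 : t 4 = 0 := by simpa [t3, hg'] using h00
  intro i
  fin_cases i <;> assumption

end XYTensor

theorem span_Pr_finrank_five_general (a b c d e f g h k : ℝ)
    (ha : 0 < a) (hc : 0 < c) (hd : 0 < d) (hab : 1 < a * b)
    (hg : g = Real.sqrt (a * c * d))
    (he : e = a * (c + d) * c / (a * b - 1))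
    (hf : f = a * (c + d) * d / (a * b - 1))
    (r : ℝ) (hr : 0 < r) :
    Module.finrank ℂ
      ↥(Submodule.span ℂ
        {v : Fin 2 × Fin 4 → ℂ | ∃ α : ℂ, ‖α‖ = r ∧
          v = fun p =>
            (![1, starRingEnd ℂ α] : Fin 2 → ℂ) p.1 *
            (![(g : ℂ) * α * (1 - α),
               α * ((h : ℂ) - (c : ℂ) * (d : ℂ) * (α + starRingEnd ℂ α) +
                 (k : ℂ) * (‖α‖ : ℂ) ^ 2),
               -((e : ℂ) + (f : ℂ) * (‖α‖ : ℂ) ^ 2),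
               -(starRingEnd ℂ α) * ((c : ℂ) + (d : ℂ) * α)] : Fin 4 → ℂ) p.2}) = 5 := by
  have hg0 : g ≠ 0 := by rw [hg]; positivity
  have hef : e + f * r ^ 2 ≠ 0 := by
    have : 0 < a * b - 1 := by linarith
    rw [he, hf]; positivity
  have hα0 : ∀ α : ℂ, ‖α‖ = r → α ≠ 0 := fun α hα => norm_ne_zero_iff.mp (hα ▸ hr.ne')
  have hPr : {v | ∃ α : ℂ, ‖α‖ = r ∧ v = xyTensor c d e f g h k α} =
      (fun α : ℂ => (α ^ 2)⁻¹ • ∑ j : Fin 5, α ^ (j : ℕ) • xyTensorCoeff c d e f g h k r j) ''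
        Metric.sphere (0 : ℂ) r := by
    ext v
    simp only [Set.mem_ofPred_eq, Set.mem_image, mem_sphere_zero_iff_norm]
    refine exists_congr fun α => and_congr_right fun hα => ?_
    rw [xyTensor_eq_smul_sum (hα0 α hα) hα, eq_comm]
  change Module.finrank ℂ ↥(span ℂ {v | ∃ α : ℂ, ‖α‖ = r ∧ v = xyTensor c d e f g h k α}) = 5
  rw [hPr, span_image_smul_of_ne_zero _ _ fun α hα =>
      inv_ne_zero (pow_ne_zero 2 (hα0 α (mem_sphere_zero_iff_norm.mp hα))),
    span_image_sum_pow_smul (Complex.sphere_infinite hr 0),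
    finrank_span_eq_card (linearIndependent_xyTensorCoeff hc.ne' hg0 hr.ne' hef), Fintype.card_fin]

/-- For fixed `r > 0`, the span of `P_r = {x_α ⊗ y_α : |α| = r}` is exactly
5-dimensional. -/
theorem span_Pr_finrank_five (a b c d e f g h k : ℝ)
    (ha : 0 < a) (hb : 0 < b) (hc : 0 < c) (hd : 0 < d) (hab : 1 < a * b)
    (hg : g = Real.sqrt (a * c * d))
    (he : e = a * (c + d) * c / (a * b - 1))
    (hf : f = a * (c + d) * d / (a * b - 1))
    (hh : h = b * e - c ^ 2) (hk : k = b * f - d ^ 2)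
    (r : ℝ) (hr : 0 < r) :
    Module.finrank ℂ
      ↥(Submodule.span ℂ
        {v : Fin 2 × Fin 4 → ℂ | ∃ α : ℂ, ‖α‖ = r ∧
          v = fun p =>
            (![1, starRingEnd ℂ α] : Fin 2 → ℂ) p.1 *
            (![(g : ℂ) * α * (1 - α),
               α * ((h : ℂ) - (c : ℂ) * (d : ℂ) * (α + starRingEnd ℂ α) +
                 (k : ℂ) * (‖α‖ : ℂ) ^ 2),
               -((e : ℂ) + (f : ℂ) * (‖α‖ : ℂ) ^ 2),
               -(starRingEnd ℂ α) * ((c : ℂ) + (d : ℂ) * α)] : Fin 4 → ℂ) p.2}) = 5 :=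
  span_Pr_finrank_five_general a b c d e f g h k ha hc hd hab hg he hf r hr
end

section
/- For r > 0 and r ≠ s > 0 with the setup of Φ[a,b,c,d], the vectors ζ₄ = (0,1)ᵀ ⊗ (0,0,0,1)ᵀ and ζ₅ = (1,0)ᵀ ⊗ (g, cd, 0, 0)ᵀ both lie in span P_r ∩ span P_s, where P_t = {x_α ⊗ y_α : |α| = t}. -/
/-!
Write a point of `P_t` as `α = t w` with `‖w‖ = 1`, so that `ᾱ = t w⁻¹`. Then `w² (x_α ⊗ y_α)` is
a polynomial of degree 4 in `w` with vector coefficients, whose constant and leading coefficients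
are `-c t² ζ₄` and `-t² ζ₅`. A vector-valued polynomial taking values in a subspace at infinitely
many points has all its coefficients in that subspace (compose with the functionals on the
quotient and count roots), so `ζ₄` and `ζ₅` lie in `span P_t` for every `t > 0`.
-/

open Polynomial Finset Complex

theorem Submodule.mem_of_forall_sum_pow_smul_mem {K V : Type*} [Field K] [AddCommGroup V]
    [Module K V] (M : Submodule K V) {S : Set K} (hS : S.Infinite) (s : Finset ℕ) (C : ℕ → V)
    (hmem : ∀ w ∈ S, ∑ n ∈ s, w ^ n • C n ∈ M) {n : ℕ} (hn : n ∈ s) : C n ∈ M := by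
  rw [← Submodule.ker_mkQ M, LinearMap.mem_ker]
  refine (Module.forall_dual_apply_eq_zero_iff K _).1 fun φ => ?_
  set q : K[X] := ∑ m ∈ s, monomial m (φ (M.mkQ (C m)))
  have hq : q = 0 := by
    refine q.eq_zero_of_infinite_isRoot (hS.mono fun w hw => ?_)
    have := congrArg φ ((Submodule.Quotient.mk_eq_zero M).2 (hmem w hw))
    simpa [q, eval_finsetSum, mul_comm, ← Submodule.mkQ_apply] using this
  simpa [q, finsetSum_coeff, coeff_monomial, hn] using congrArg (coeff · n) hq

theorem Complex.infinite_sphere_zero_one : (Metric.sphere (0 : ℂ) 1).Infinite :=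
  (isPreconnected_sphere (by simp) 0 1).infinite_of_nontrivial
    ⟨1, by simp, -1, by simp, by norm_num⟩

theorem Complex.norm_ofReal_mul_of_norm_eq_one {t : ℝ} (ht : 0 ≤ t) {w : ℂ} (hw : ‖w‖ = 1) :
    ‖(t : ℂ) * w‖ = t := by
  rw [norm_mul, hw, norm_real, Real.norm_of_nonneg ht, mul_one]

noncomputable section

def xTensorY (c d e f g h k : ℝ) (α : ℂ) : Fin 2 × Fin 4 → ℂ := fun p =>
  (![1, starRingEnd ℂ α] : Fin 2 → ℂ) p.1 *
  (![(g : ℂ) * α * (1 - α),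
     α * ((h : ℂ) - (c : ℂ) * (d : ℂ) * (α + starRingEnd ℂ α) +
       (k : ℂ) * (‖α‖ : ℂ) ^ 2),
     -((e : ℂ) + (f : ℂ) * (‖α‖ : ℂ) ^ 2),
     -(starRingEnd ℂ α) * ((c : ℂ) + (d : ℂ) * α)] : Fin 4 → ℂ) p.2

def xTensorYCoeff (c d e f g h k t : ℝ) : ℕ → Fin 2 × Fin 4 → ℂ
  | 0 => (-(c * t ^ 2) : ℂ) • fun p =>
      (![0, 1] : Fin 2 → ℂ) p.1 * (![0, 0, 0, 1] : Fin 4 → ℂ) p.2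
  | 1 => fun p => !![0, 0, 0, -c * t; 0, -c * d * t ^ 3, -(e + f * t ^ 2) * t, -d * t ^ 3] p.1 p.2
  | 2 => fun p => !![0, -c * d * t ^ 2, -(e + f * t ^ 2), -d * t ^ 2;
      g * t ^ 2, (h + k * t ^ 2) * t ^ 2, 0, 0] p.1 p.2
  | 3 => fun p => !![g * t, (h + k * t ^ 2) * t, 0, 0; -g * t ^ 3, -c * d * t ^ 3, 0, 0] p.1 p.2
  | 4 => (-(t ^ 2) : ℂ) • fun p =>
      (![1, 0] : Fin 2 → ℂ) p.1 * (![(g : ℂ), (c : ℂ) * (d : ℂ), 0, 0] : Fin 4 → ℂ) p.2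
  | _ => 0

end

theorem sq_smul_xTensorY_eq_sum (c d e f g h k : ℝ) {t : ℝ} (ht : 0 ≤ t) {w : ℂ} (hw : ‖w‖ = 1) :
    w ^ 2 • xTensorY c d e f g h k (t * w) =
      ∑ n ∈ range 5, w ^ n • xTensorYCoeff c d e f g h k t n := by
  have hw0 : w ≠ 0 := norm_ne_zero_iff.1 (hw.symm ▸ one_ne_zero)
  have hconj : starRingEnd ℂ (t * w) = t * w⁻¹ := by
    rw [map_mul, conj_ofReal, ← inv_eq_conj hw]
  ext ⟨i, j⟩
  simp only [xTensorY, xTensorYCoeff, hconj, norm_ofReal_mul_of_norm_eq_one ht hw, sum_range_succ, sum_range_zero, Pi.smul_apply,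
    Pi.add_apply, Pi.zero_apply, smul_eq_mul]
  fin_cases i <;> fin_cases j <;> simp <;> field_simp <;> ring

theorem xTensorYCoeff_mem_span (c d e f g h k : ℝ) {t : ℝ} (ht : 0 ≤ t) {n : ℕ} (hn : n < 5) :
    xTensorYCoeff c d e f g h k t n ∈
      Submodule.span ℂ {v | ∃ α : ℂ, ‖α‖ = t ∧ v = xTensorY c d e f g h k α} := by
  refine Submodule.mem_of_forall_sum_pow_smul_mem _ infinite_sphere_zero_one _ _
    (fun w hw => ?_) (mem_range.2 hn)
  rw [mem_sphere_zero_iff_norm] at hw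
  rw [← sq_smul_xTensorY_eq_sum c d e f g h k ht hw]
  exact Submodule.smul_mem _ _
    (Submodule.subset_span ⟨t * w, norm_ofReal_mul_of_norm_eq_one ht hw, rfl⟩)

theorem zeta_in_intersection_general (c d e f g h k : ℝ)
    (hc : 0 < c)
    (r s : ℝ) (hr : 0 < r) (hs : 0 < s) :
    let z : ℂ → (Fin 2 × Fin 4 → ℂ) := fun α => fun p =>
      (![1, starRingEnd ℂ α] : Fin 2 → ℂ) p.1 *
      (![(g : ℂ) * α * (1 - α),
         α * ((h : ℂ) - (c : ℂ) * (d : ℂ) * (α + starRingEnd ℂ α) +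
           (k : ℂ) * (‖α‖ : ℂ) ^ 2),
         -((e : ℂ) + (f : ℂ) * (‖α‖ : ℂ) ^ 2),
         -(starRingEnd ℂ α) * ((c : ℂ) + (d : ℂ) * α)] : Fin 4 → ℂ) p.2
    let P : ℝ → Set (Fin 2 × Fin 4 → ℂ) := fun t =>
      {v | ∃ α : ℂ, ‖α‖ = t ∧ v = z α}
    let ζ₄ : Fin 2 × Fin 4 → ℂ := fun p =>
      (![0, 1] : Fin 2 → ℂ) p.1 * (![0, 0, 0, 1] : Fin 4 → ℂ) p.2
    let ζ₅ : Fin 2 × Fin 4 → ℂ := fun p =>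
      (![1, 0] : Fin 2 → ℂ) p.1 * (![(g : ℂ), (c : ℂ) * (d : ℂ), 0, 0] : Fin 4 → ℂ) p.2
    ζ₄ ∈ Submodule.span ℂ (P r) ⊓ Submodule.span ℂ (P s) ∧
      ζ₅ ∈ Submodule.span ℂ (P r) ⊓ Submodule.span ℂ (P s) := by
  intro z P ζ₄ ζ₅
  have mem_span : ∀ t : ℝ, 0 < t → ζ₄ ∈ Submodule.span ℂ (P t) ∧ ζ₅ ∈ Submodule.span ℂ (P t) :=
    fun t ht =>
      have ht0 : (t : ℂ) ≠ 0 := ofReal_ne_zero.2 ht.ne'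
      ⟨(Submodule.smul_mem_iff _ (by simp [ht0, hc.ne'])).1
          (xTensorYCoeff_mem_span c d e f g h k ht.le (n := 0) (by norm_num)),
        (Submodule.smul_mem_iff _ (by simp [ht0])).1
          (xTensorYCoeff_mem_span c d e f g h k ht.le (n := 4) (by norm_num))⟩
  exact ⟨⟨(mem_span r hr).1, (mem_span s hs).1⟩, ⟨(mem_span r hr).2, (mem_span s hs).2⟩⟩

/-- The product vectors `ζ₄ = (0,1)ᵀ ⊗ (0,0,0,1)ᵀ` and `ζ₅ = (1,0)ᵀ ⊗ (g,cd,0,0)ᵀ`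
lie in `span P_r ∩ span P_s` for distinct radii `r ≠ s`. -/
theorem zeta_in_intersection (a b c d e f g h k : ℝ)
    (ha : 0 < a) (hb : 0 < b) (hc : 0 < c) (hd : 0 < d) (hab : 1 < a * b)
    (hg : g = Real.sqrt (a * c * d))
    (he : e = a * (c + d) * c / (a * b - 1))
    (hf : f = a * (c + d) * d / (a * b - 1))
    (hh : h = b * e - c ^ 2) (hk : k = b * f - d ^ 2)
    (r s : ℝ) (hr : 0 < r) (hs : 0 < s) (hrs : r ≠ s) :
    let z : ℂ → (Fin 2 × Fin 4 → ℂ) := fun α => fun p =>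
      (![1, starRingEnd ℂ α] : Fin 2 → ℂ) p.1 *
      (![(g : ℂ) * α * (1 - α),
         α * ((h : ℂ) - (c : ℂ) * (d : ℂ) * (α + starRingEnd ℂ α) +
           (k : ℂ) * (‖α‖ : ℂ) ^ 2),
         -((e : ℂ) + (f : ℂ) * (‖α‖ : ℂ) ^ 2),
         -(starRingEnd ℂ α) * ((c : ℂ) + (d : ℂ) * α)] : Fin 4 → ℂ) p.2
    let P : ℝ → Set (Fin 2 × Fin 4 → ℂ) := fun t =>
      {v | ∃ α : ℂ, ‖α‖ = t ∧ v = z α}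
    let ζ₄ : Fin 2 × Fin 4 → ℂ := fun p =>
      (![0, 1] : Fin 2 → ℂ) p.1 * (![0, 0, 0, 1] : Fin 4 → ℂ) p.2
    let ζ₅ : Fin 2 × Fin 4 → ℂ := fun p =>
      (![1, 0] : Fin 2 → ℂ) p.1 * (![(g : ℂ), (c : ℂ) * (d : ℂ), 0, 0] : Fin 4 → ℂ) p.2
    ζ₄ ∈ Submodule.span ℂ (P r) ⊓ Submodule.span ℂ (P s) ∧
      ζ₅ ∈ Submodule.span ℂ (P r) ⊓ Submodule.span ℂ (P s) :=
  zeta_in_intersection_general c d e f g h k hc r s hr hs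
end

section
/- With the setup of Φ[a,b,c,d] and for every r > 0, the vector ζ₁^r = (0, 0, dr²/c, -(e + fr²)/c, 0, 0, 1, 0)ᵀ ∈ ℂ⁸ is orthogonal to every product vector x_α ⊗ y_α with |α| = r, i.e. ⟨ζ₁^r, x_α ⊗ y_α⟩ = 0 for all α on the circle of radius r. -/
theorem zeta1_orthogonal_general (c d e f g h k : ℝ)
    (hc : 0 < c)
    (r : ℝ) (α : ℂ) (habs : ‖α‖ = r) :
    let z : Fin 2 × Fin 4 → ℂ := fun p =>
      (![1, starRingEnd ℂ α] : Fin 2 → ℂ) p.1 *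
      (![(g : ℂ) * α * (1 - α),
         α * ((h : ℂ) - (c : ℂ) * (d : ℂ) * (α + starRingEnd ℂ α) +
           (k : ℂ) * (‖α‖ : ℂ) ^ 2),
         -((e : ℂ) + (f : ℂ) * (‖α‖ : ℂ) ^ 2),
         -(starRingEnd ℂ α) * ((c : ℂ) + (d : ℂ) * α)] : Fin 4 → ℂ) p.2
    let ζ₁ : Fin 2 × Fin 4 → ℂ := fun p =>
      (!![(0 : ℂ), 0, ((d * r ^ 2 / c : ℝ) : ℂ), ((-(e + f * r ^ 2) / c : ℝ) : ℂ);
          0, 0, 1, 0] : Matrix (Fin 2) (Fin 4) ℂ) p.1 p.2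
    ∑ p : Fin 2 × Fin 4, starRingEnd ℂ (ζ₁ p) * z p = 0 := by
  intro z ζ₁
  have hnorm : starRingEnd ℂ α * α = (r : ℂ) ^ 2 := by rw [Complex.conj_mul', habs]
  have hc₀ : (c : ℂ) ≠ 0 := by exact_mod_cast hc.ne'
  simp only [z, ζ₁, Fintype.sum_prod_type, Fin.sum_univ_two, Fin.sum_univ_four, Matrix.of_apply,
    Matrix.cons_val', Matrix.cons_val_fin_one, Matrix.cons_val_zero, Matrix.cons_val_one,
    Matrix.cons_val, habs, map_zero, map_one, map_neg, map_div₀, map_mul, map_add, map_pow,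
    Complex.conj_ofReal, Complex.ofReal_div, Complex.ofReal_mul, Complex.ofReal_pow,
    Complex.ofReal_add, Complex.ofReal_neg, zero_mul, one_mul, zero_add, add_zero]
  -- The three surviving terms pair `ζ₁` with `y₃`, `y₄` and `ᾱ y₃`; they cancel because `ᾱ α = r²`.
  field_simp
  linear_combination ((e : ℂ) + f * r ^ 2) * d * hnorm

/-- The vector `ζ₁^r = (0,0,dr²/c,-(e+fr²)/c,0,0,1,0)` is orthogonal to every
product vector `x_α ⊗ y_α` with `|α| = r`. -/
theorem zeta1_orthogonal (a b c d e f g h k : ℝ)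
    (ha : 0 < a) (hb : 0 < b) (hc : 0 < c) (hd : 0 < d) (hab : 1 < a * b)
    (hg : g = Real.sqrt (a * c * d))
    (he : e = a * (c + d) * c / (a * b - 1))
    (hf : f = a * (c + d) * d / (a * b - 1))
    (hh : h = b * e - c ^ 2) (hk : k = b * f - d ^ 2)
    (r : ℝ) (hr : 0 < r) (α : ℂ) (habs : ‖α‖ = r) :
    let z : Fin 2 × Fin 4 → ℂ := fun p =>
      (![1, starRingEnd ℂ α] : Fin 2 → ℂ) p.1 *
      (![(g : ℂ) * α * (1 - α),
         α * ((h : ℂ) - (c : ℂ) * (d : ℂ) * (α + starRingEnd ℂ α) +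
           (k : ℂ) * (‖α‖ : ℂ) ^ 2),
         -((e : ℂ) + (f : ℂ) * (‖α‖ : ℂ) ^ 2),
         -(starRingEnd ℂ α) * ((c : ℂ) + (d : ℂ) * α)] : Fin 4 → ℂ) p.2
    let ζ₁ : Fin 2 × Fin 4 → ℂ := fun p =>
      (!![(0 : ℂ), 0, ((d * r ^ 2 / c : ℝ) : ℂ), ((-(e + f * r ^ 2) / c : ℝ) : ℂ);
          0, 0, 1, 0] : Matrix (Fin 2) (Fin 4) ℂ) p.1 p.2
    ∑ p : Fin 2 × Fin 4, starRingEnd ℂ (ζ₁ p) * z p = 0 :=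
  zeta1_orthogonal_general c d e f g h k hc r α habs
end
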